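/- arXiv:1609.04907 — 5 statements merged into one kernel-verified Lean document; each statement's English description precedes it below -/
import Mathlib

section
/- Fix t ≥ 0, x > 0, s > 0 and i ∈ χ. Then the function v ↦ L(t,x,s,i,v) is differentiable on (0,∞) and satisfies, for every v > 0, the identity L·(∂L/∂v) + r(i)·L/σ̄ + σ(t+v,i)²·L²/(2σ̄²) − σ(t+v,i)²·L/(2σ̄) = 0, where L = L(t,x,s,i,v) and σ̄ = σ̄(t,i,v). -/
/-!
Write `L = N / √A` with `N(v) = log (x/s) - ∫ₜ^{t+v} (r - σ²/2)` and `A(v) = ∫ₜ^{t+v} σ²`.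
By the fundamental theorem of calculus `N' = -(r - σ(t+v)²/2)` and `A' = σ(t+v)²`, so
`L' = (N' - L A' / (2√A)) / √A`; substituting this into the identity makes it vanish identically.
-/

open MeasureTheory Real Filter Set


noncomputable def sigbar {k : ℕ} (σ : ℝ → Fin k → ℝ) (t : ℝ) (i : Fin k) (v : ℝ) : ℝ :=
  Real.sqrt (∫ u in t..(t+v), (σ u i)^2)

noncomputable def Lfun {k : ℕ} (r : Fin k → ℝ) (σ : ℝ → Fin k → ℝ)
    (t x s : ℝ) (i : Fin k) (v : ℝ) : ℝ :=
  (Real.log (x / s) - ∫ u in t..(t+v), (r i - (σ u i)^2 / 2)) / sigbar σ t i v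

noncomputable def alphaDens {k : ℕ} (r : Fin k → ℝ) (σ : ℝ → Fin k → ℝ)
    (x t s : ℝ) (i : Fin k) (v : ℝ) : ℝ :=
  Real.exp (-(Lfun r σ t x s i v)^2 / 2) / (Real.sqrt (2 * Real.pi) * x * sigbar σ t i v)

section

variable {f : ℝ → ℝ} {c a v : ℝ}

theorem uIcc_add_subset_Ici (hca : c ≤ a) (hv : 0 ≤ v) : uIcc a (a + v) ⊆ Ici c := by
  rw [uIcc_of_le (by linarith)]
  exact fun u hu => hca.trans hu.1

theorem hasDerivAt_intervalIntegral_add_right (hf : ContinuousOn f (Ici c)) (hca : c ≤ a)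
    (hv : 0 < v) : HasDerivAt (fun w => ∫ u in a..a + w, f u) (f (a + v)) v := by
  have hlt : c < a + v := by linarith
  have hsub := uIcc_add_subset_Ici hca hv.le
  have hFTC : HasDerivAt (fun y => ∫ u in a..y, f u) (f (a + v)) (a + v) :=
    intervalIntegral.integral_hasDerivAt_right (hf.mono hsub).intervalIntegrable
      ⟨Ici c, Ici_mem_nhds hlt, hf.aestronglyMeasurable measurableSet_Ici⟩
      (hf.continuousAt (Ici_mem_nhds hlt))
  exact hFTC.comp_const_add a v

theorem intervalIntegral_add_pos (hf : ContinuousOn f (Ici c)) (hpos : ∀ u, c ≤ u → 0 < f u)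
    (hca : c ≤ a) (hv : 0 < v) : 0 < ∫ u in a..a + v, f u := by
  exact intervalIntegral.intervalIntegral_pos_of_pos_on
    (hf.mono (uIcc_add_subset_Ici hca hv.le)).intervalIntegrable
    (fun u hu => hpos u (hca.trans hu.1.le)) (by linarith)

end

theorem HasDerivAt.div_sqrt {N A : ℝ → ℝ} {N' A' v : ℝ} (hN : HasDerivAt N N' v)
    (hA : HasDerivAt A A' v) (hpos : 0 < A v) :
    HasDerivAt (fun w => N w / √(A w))
      ((N' - N v / √(A v) * A' / (2 * √(A v))) / √(A v)) v := by
  have hS : 0 < √(A v) := sqrt_pos.mpr hpos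
  refine (hN.div (hA.sqrt hpos.ne') hS.ne').congr_deriv ?_
  field_simp

theorem stmt_5_general {k : ℕ} (r : Fin k → ℝ) (σ : ℝ → Fin k → ℝ)
    (hσpos : ∀ u : ℝ, 0 ≤ u → ∀ i : Fin k, 0 < σ u i)
    (hσcont : ∀ i : Fin k, ContinuousOn (fun u => σ u i) (Set.Ici 0))
    (t x s : ℝ) (ht : 0 ≤ t) (i : Fin k) :
    ∀ v : ℝ, 0 < v → ∃ L' : ℝ,
      HasDerivAt (fun w => Lfun r σ t x s i w) L' v ∧
      Lfun r σ t x s i v * L'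
        + r i * Lfun r σ t x s i v / sigbar σ t i v
        + (σ (t+v) i)^2 * (Lfun r σ t x s i v)^2 / (2 * (sigbar σ t i v)^2)
        - (σ (t+v) i)^2 * Lfun r σ t x s i v / (2 * sigbar σ t i v) = 0 := by
  intro v hv
  have hσsq : ContinuousOn (fun u => σ u i ^ 2) (Ici 0) := (hσcont i).pow 2
  have hvar : 0 < ∫ u in t..t + v, σ u i ^ 2 :=
    intervalIntegral_add_pos hσsq (fun u hu => pow_pos (hσpos u hu i) 2) ht hv
  have hdrift : HasDerivAt (fun w => ∫ u in t..t + w, (r i - σ u i ^ 2 / 2))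
      (r i - σ (t + v) i ^ 2 / 2) v :=
    hasDerivAt_intervalIntegral_add_right (continuousOn_const.sub (hσsq.div_const 2)) ht hv
  have hL := (hdrift.const_sub (Real.log (x / s))).div_sqrt
    (hasDerivAt_intervalIntegral_add_right hσsq ht hv) hvar
  have hS : sigbar σ t i v ≠ 0 := (sqrt_pos.mpr hvar).ne'
  refine ⟨(-(r i - σ (t + v) i ^ 2 / 2)
    - Lfun r σ t x s i v * σ (t + v) i ^ 2 / (2 * sigbar σ t i v)) / sigbar σ t i v, hL, ?_⟩
  field_simp
  ring

theorem stmt_5 {k : ℕ} (r : Fin k → ℝ) (σ : ℝ → Fin k → ℝ)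
    (hr : ∀ i : Fin k, 0 ≤ r i)
    (hσpos : ∀ u : ℝ, 0 ≤ u → ∀ i : Fin k, 0 < σ u i)
    (hσcont : ∀ i : Fin k, ContinuousOn (fun u => σ u i) (Set.Ici 0))
    (t x s : ℝ) (ht : 0 ≤ t) (hx : 0 < x) (hs : 0 < s) (i : Fin k) :
    ∀ v : ℝ, 0 < v → ∃ L' : ℝ,
      HasDerivAt (fun w => Lfun r σ t x s i w) L' v ∧
      Lfun r σ t x s i v * L'
        + r i * Lfun r σ t x s i v / sigbar σ t i v
        + (σ (t+v) i)^2 * (Lfun r σ t x s i v)^2 / (2 * (sigbar σ t i v)^2)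
        - (σ (t+v) i)^2 * Lfun r σ t x s i v / (2 * sigbar σ t i v) = 0 :=
  stmt_5_general r σ hσpos hσcont t x s ht i
end

section
/- The unique solution φ ∈ 𝓑 of the integral equation (IE) is nonnegative: φ(t,s,i,y) ≥ 0 for every (t,s,i,y) ∈ D̄. -/
open MeasureTheory Real Filter Set

noncomputable def sumLam {k : ℕ} (lam : Fin k → Fin k → ℝ → ℝ) (i : Fin k) (y : ℝ) : ℝ :=
  ∑ j ∈ Finset.univ.filter (fun j => j ≠ i), lam i j y

noncomputable def Lambda {k : ℕ} (lam : Fin k → Fin k → ℝ → ℝ) (i : Fin k) (y : ℝ) : ℝ :=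
  ∫ v in (0:ℝ)..y, sumLam lam i v

noncomputable def Fcdf {k : ℕ} (lam : Fin k → Fin k → ℝ → ℝ) (i : Fin k) (y : ℝ) : ℝ :=
  1 - Real.exp (-(Lambda lam i y))

noncomputable def fdens {k : ℕ} (lam : Fin k → Fin k → ℝ → ℝ) (i : Fin k) (y : ℝ) : ℝ :=
  sumLam lam i y * Real.exp (-(Lambda lam i y))

noncomputable def pMat {k : ℕ} (lam : Fin k → Fin k → ℝ → ℝ) (i j : Fin k) (y : ℝ) : ℝ :=
  if j = i then (if sumLam lam i y = 0 then 1 else 0)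
  else (if sumLam lam i y = 0 then 0 else lam i j y / sumLam lam i y)

def memDbar (T t s y : ℝ) : Prop :=
  t ∈ Set.Icc 0 T ∧ s ∈ Set.Ici (0:ℝ) ∧ y ∈ Set.Icc 0 t

def memD (T t s y : ℝ) : Prop :=
  t ∈ Set.Ioo 0 T ∧ s ∈ Set.Ioi (0:ℝ) ∧ y ∈ Set.Ioo 0 t

noncomputable def Aop {k : ℕ} (lam : Fin k → Fin k → ℝ → ℝ) (r : Fin k → ℝ)
    (σ : ℝ → Fin k → ℝ) (ρ : Fin k → ℝ → ℝ → ℝ) (T : ℝ)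
    (φ : ℝ → ℝ → Fin k → ℝ → ℝ) (t s : ℝ) (i : Fin k) (y : ℝ) : ℝ :=
  (1 - Fcdf lam i (T - t + y)) / (1 - Fcdf lam i y) * ρ i t s
  + ∫ v in (0:ℝ)..(T - t),
      Real.exp (-(r i * v)) * (fdens lam i (y + v) / (1 - Fcdf lam i y)) *
      ∑ j ∈ Finset.univ.filter (fun j => j ≠ i),
        pMat lam i j (y + v) *
        ∫ x in Set.Ioi (0:ℝ), φ (t + v) x j 0 * alphaDens r σ x t s i v

def memB {k : ℕ} (T : ℝ) (φ : ℝ → ℝ → Fin k → ℝ → ℝ) : Prop :=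
  (∀ i : Fin k, ContinuousOn (fun p : ℝ × ℝ × ℝ => φ p.1 p.2.1 i p.2.2)
      {p : ℝ × ℝ × ℝ | memDbar T p.1 p.2.1 p.2.2}) ∧
  ∃ M : ℝ, ∀ t s y : ℝ, memDbar T t s y → ∀ i : Fin k, |φ t s i y| ≤ M * (1 + s)

noncomputable def normB {k : ℕ} (T : ℝ) (φ : ℝ → ℝ → Fin k → ℝ → ℝ) : ℝ :=
  sSup {a : ℝ | ∃ t s y : ℝ, ∃ i : Fin k, memDbar T t s y ∧ a = |φ t s i y| / (1 + s)}

def isBSMSolution {k : ℕ} (r : Fin k → ℝ) (σ : ℝ → Fin k → ℝ) (K : ℝ → ℝ) (T : ℝ)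
    (ρ : Fin k → ℝ → ℝ → ℝ) : Prop :=
  ∀ i : Fin k,
    ContinuousOn (fun p : ℝ × ℝ => ρ i p.1 p.2) (Set.Icc 0 T ×ˢ Set.Ici 0) ∧
    (∀ t ∈ Set.Icc (0:ℝ) T, ∀ s ∈ Set.Ici (0:ℝ), 0 ≤ ρ i t s) ∧
    (∃ M : ℝ, ∀ t ∈ Set.Icc (0:ℝ) T, ∀ s ∈ Set.Ici (0:ℝ), ρ i t s ≤ M * (1 + s)) ∧
    (∀ t ∈ Set.Ioo (0:ℝ) T, ∀ s ∈ Set.Ioi (0:ℝ),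
      (DifferentiableAt ℝ (fun u => ρ i u s) t ∧
       DifferentiableAt ℝ (fun x => ρ i t x) s ∧
       DifferentiableAt ℝ (deriv (fun x => ρ i t x)) s) ∧
      deriv (fun u => ρ i u s) t + r i * s * deriv (fun x => ρ i t x) s
        + (1/2) * (σ t i)^2 * s^2 * deriv (deriv (fun x => ρ i t x)) s
        = r i * ρ i t s) ∧
    (∀ s ∈ Set.Ici (0:ℝ), ρ i T s = K s)


open ProbabilityTheory

/-!
Nonnegativity propagates backwards from maturity in steps of length `δ = 1 / (2c)`. Suppose
`φ ≥ 0` for times `≥ τ` and let `m` bound `-φ / (1 + s)` for times `≥ τ - δ`. At a point with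
time `t ∈ [τ - δ, τ)` only jumps occurring within `τ - t ≤ δ` can contribute negatively. The
kernel `α` is a lognormal density with mean `s e^{rv}`, so after discounting
`∫ e^{-rv} (1 + x) α(x) dx = e^{-rv} + s ≤ 1 + s`; the jump density is at most `c`, hence
`-φ ≤ c δ m (1 + s) = (m / 2)(1 + s)`. Halving the linear-growth bound that `φ ∈ 𝓑` provides
forever gives `φ ≥ 0`. At `s = 0` the kernel is degenerate (`log (x / 0) = 0`), and this case
follows by continuity of `φ`.
-/

open ProbabilityTheory

lemma integrableOn_Ioi_zero_iff_integrable_exp_mul {g : ℝ → ℝ} :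
    IntegrableOn g (Ioi 0) ↔ Integrable fun u => exp u * g (exp u) := by
  rw [← range_exp, ← image_univ, integrableOn_image_iff_integrableOn_abs_deriv_smul
    MeasurableSet.univ (fun u _ => (hasDerivAt_exp u).hasDerivWithinAt) exp_injective.injOn]
  simp [abs_of_pos (exp_pos _)]

lemma integral_Ioi_zero_eq_integral_exp_mul (g : ℝ → ℝ) :
    ∫ x in Ioi 0, g x = ∫ u, exp u * g (exp u) := by
  rw [← range_exp, ← image_univ, integral_image_eq_integral_abs_deriv_smul
    MeasurableSet.univ (fun u _ => (hasDerivAt_exp u).hasDerivWithinAt) exp_injective.injOn]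
  simp [abs_of_pos (exp_pos _)]

lemma integral_exp_mul_gaussianPDFReal (μ : ℝ) {v : NNReal} (hv : v ≠ 0) :
    Integrable (fun u => exp u * gaussianPDFReal μ v u) ∧
      ∫ u, exp u * gaussianPDFReal μ v u = exp (μ + v / 2) := by
  have h : ∫ u, exp u * gaussianPDFReal μ v u = exp (μ + v / 2) := by
    simpa [mgf, integral_gaussianReal_eq_integral_smul hv, mul_comm] using
      congrFun (mgf_id_gaussianReal (μ := μ) (v := v)) 1
  exact ⟨.of_integral_ne_zero (h ▸ (exp_pos _).ne'), h⟩

noncomputable def lognormalPDF (μ : ℝ) (v : NNReal) (x : ℝ) : ℝ :=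
  gaussianPDFReal μ v (log x) / x

lemma integral_one_add_mul_lognormalPDF (μ : ℝ) {v : NNReal} (hv : v ≠ 0) :
    IntegrableOn (fun x => (1 + x) * lognormalPDF μ v x) (Ioi 0) ∧
      ∫ x in Ioi 0, (1 + x) * lognormalPDF μ v x = 1 + exp (μ + v / 2) := by
  have hsub : (fun u => exp u * ((1 + exp u) * lognormalPDF μ v (exp u)))
      = fun u => gaussianPDFReal μ v u + exp u * gaussianPDFReal μ v u := by
    ext u
    simp only [lognormalPDF, log_exp]
    field_simp
  obtain ⟨hint, hval⟩ := integral_exp_mul_gaussianPDFReal μ hv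
  rw [integrableOn_Ioi_zero_iff_integrable_exp_mul, integral_Ioi_zero_eq_integral_exp_mul, hsub,
    integral_add (integrable_gaussianPDFReal μ v) hint, integral_gaussianPDFReal_eq_one μ hv, hval]
  exact ⟨(integrable_gaussianPDFReal μ v).add hint, rfl⟩

lemma neg_setIntegral_mul_le {α : Type*} [MeasurableSpace α] {μ : Measure α} {S : Set α}
    (hS : MeasurableSet S) {ψ κ w : α → ℝ} {m : ℝ} (hm : 0 ≤ m) (hκ : ∀ x ∈ S, 0 ≤ κ x)
    (hw : ∀ x ∈ S, 0 ≤ w x) (hψ : ∀ x ∈ S, -ψ x ≤ m * w x)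
    (hwκ : IntegrableOn (fun x => w x * κ x) S μ) :
    -∫ x in S, ψ x * κ x ∂μ ≤ m * ∫ x in S, w x * κ x ∂μ := by
  by_cases hψκ : IntegrableOn (fun x => ψ x * κ x) S μ
  · rw [← integral_neg, ← integral_const_mul]
    refine setIntegral_mono_on hψκ.neg (hwκ.const_mul m) hS fun x hx => ?_
    have := mul_le_mul_of_nonneg_right (hψ x hx) (hκ x hx)
    linarith
  · rw [integral_undef hψκ, neg_zero]
    exact mul_nonneg hm (setIntegral_nonneg hS fun x hx => mul_nonneg (hw x hx) (hκ x hx))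

section Kernel

variable {k : ℕ} {r : Fin k → ℝ} {σ : ℝ → Fin k → ℝ} {t s : ℝ} {i : Fin k} {v : ℝ}

lemma alphaDens_nonneg {x : ℝ} (hx : 0 ≤ x) : 0 ≤ alphaDens r σ x t s i v := by
  unfold alphaDens sigbar
  positivity

lemma alphaDens_eq_lognormalPDF {x : ℝ} (hx : 0 < x) (hs : 0 < s)
    (hσ : 0 < sigbar σ t i v) :
    alphaDens r σ x t s i v = lognormalPDF (log s + ∫ u in t..(t + v), (r i - σ u i ^ 2 / 2))
      (sigbar σ t i v ^ 2).toNNReal x := by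
  rw [alphaDens, Lfun, lognormalPDF, gaussianPDFReal, Real.coe_toNNReal _ (sq_nonneg _),
    sqrt_mul (by positivity : (0 : ℝ) ≤ 2 * π), sqrt_sq hσ.le, log_div hx.ne' hs.ne']
  field_simp
  ring_nf

lemma integral_drift_add_sigbar_sq (hσ : 0 < sigbar σ t i v) :
    (∫ u in t..(t + v), (r i - σ u i ^ 2 / 2)) + sigbar σ t i v ^ 2 / 2 = r i * v := by
  have hI : 0 < ∫ u in t..(t + v), σ u i ^ 2 := sqrt_pos.mp hσ
  have hint : IntervalIntegrable (fun u => σ u i ^ 2) volume t (t + v) :=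
    intervalIntegral.intervalIntegrable_of_integral_ne_zero hI.ne'
  rw [sigbar, sq_sqrt hI.le, intervalIntegral.integral_sub intervalIntegrable_const
    (hint.div_const 2), intervalIntegral.integral_const, intervalIntegral.integral_div]
  simp only [add_sub_cancel_left, smul_eq_mul]
  ring

lemma integral_one_add_mul_alphaDens (hs : 0 < s) (hσ : 0 < sigbar σ t i v) :
    IntegrableOn (fun x => (1 + x) * alphaDens r σ x t s i v) (Ioi 0) ∧
      ∫ x in Ioi 0, (1 + x) * alphaDens r σ x t s i v = 1 + s * exp (r i * v) := by
  have hv : (sigbar σ t i v ^ 2).toNNReal ≠ 0 := by simp [hσ.ne']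
  have heq : EqOn (fun x => (1 + x) * alphaDens r σ x t s i v) (fun x => (1 + x) *
      lognormalPDF (log s + ∫ u in t..(t + v), (r i - σ u i ^ 2 / 2))
        (sigbar σ t i v ^ 2).toNNReal x) (Ioi 0) :=
    fun x hx => by simp only [alphaDens_eq_lognormalPDF hx hs hσ]
  obtain ⟨hint, hval⟩ := integral_one_add_mul_lognormalPDF
    (log s + ∫ u in t..(t + v), (r i - σ u i ^ 2 / 2)) hv
  refine ⟨hint.congr_fun heq.symm measurableSet_Ioi, ?_⟩
  rw [setIntegral_congr_fun measurableSet_Ioi heq, hval, Real.coe_toNNReal _ (sq_nonneg _),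
    add_assoc, integral_drift_add_sigbar_sq hσ, exp_add, exp_log hs]

lemma neg_integral_mul_alphaDens_le (hs : 0 < s) {ψ : ℝ → ℝ} {m : ℝ} (hm : 0 ≤ m)
    (hψ : ∀ x ∈ Ioi (0 : ℝ), -ψ x ≤ m * (1 + x)) :
    -∫ x in Ioi 0, ψ x * alphaDens r σ x t s i v ≤ m * (1 + s * exp (r i * v)) := by
  rcases (show 0 ≤ sigbar σ t i v from sqrt_nonneg _).eq_or_lt with hσ | hσ
  · have hα : ∀ x, alphaDens r σ x t s i v = 0 := fun x => by
      rw [alphaDens, ← hσ, mul_zero, div_zero]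
    simp only [hα, mul_zero, integral_zero, neg_zero]
    positivity
  obtain ⟨hint, hval⟩ := integral_one_add_mul_alphaDens hs hσ
  rw [← hval]
  exact neg_setIntegral_mul_le measurableSet_Ioi hm (fun x hx => alphaDens_nonneg (le_of_lt hx))
    (fun x (hx : 0 < x) => by positivity) hψ hint

end Kernel

section Rates

variable {k : ℕ} {lam : Fin k → Fin k → ℝ → ℝ} {c : ℝ}

lemma sumLam_nonneg (hnn : ∀ i j : Fin k, i ≠ j → ∀ y : ℝ, 0 < y → 0 ≤ lam i j y)
    (i : Fin k) {y : ℝ} (hy : 0 < y) : 0 ≤ sumLam lam i y :=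
  Finset.sum_nonneg fun j hj => hnn i j (Ne.symm (Finset.mem_filter.mp hj).2) y hy

lemma intervalIntegrable_sumLam (hmeas : ∀ i j : Fin k, i ≠ j → Measurable (lam i j))
    (hnn : ∀ i j : Fin k, i ≠ j → ∀ y : ℝ, 0 < y → 0 ≤ lam i j y)
    (hbound : ∀ i : Fin k, ∀ y : ℝ, 0 < y → sumLam lam i y ≤ c) (i : Fin k) {b : ℝ}
    (hb : 0 ≤ b) : IntervalIntegrable (sumLam lam i) volume 0 b := by
  have hmeas' : Measurable (sumLam lam i) :=
    Finset.measurable_sum _ fun j hj => hmeas i j (Ne.symm (Finset.mem_filter.mp hj).2)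
  rw [intervalIntegrable_iff_integrableOn_Ioc_of_le hb]
  refine Measure.integrableOn_of_bounded (M := c) measure_Ioc_lt_top.ne
    hmeas'.aestronglyMeasurable ((ae_restrict_iff' measurableSet_Ioc).mpr (ae_of_all _ ?_))
  intro u hu
  rw [norm_of_nonneg (sumLam_nonneg hnn i hu.1)]
  exact hbound i u hu.1

lemma monotoneOn_Lambda (hmeas : ∀ i j : Fin k, i ≠ j → Measurable (lam i j))
    (hnn : ∀ i j : Fin k, i ≠ j → ∀ y : ℝ, 0 < y → 0 ≤ lam i j y)
    (hbound : ∀ i : Fin k, ∀ y : ℝ, 0 < y → sumLam lam i y ≤ c) (i : Fin k) :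
    MonotoneOn (Lambda lam i) (Ici 0) := by
  intro y hy z hz hyz
  have hdiff := intervalIntegral.integral_interval_sub_left
    (intervalIntegrable_sumLam hmeas hnn hbound i hz)
    (intervalIntegrable_sumLam hmeas hnn hbound i hy)
  have hpos : 0 ≤ ∫ u in y..z, sumLam lam i u := by
    rw [intervalIntegral.integral_of_le hyz]
    exact setIntegral_nonneg measurableSet_Ioc fun u hu =>
      sumLam_nonneg hnn i (lt_of_le_of_lt (mem_Ici.mp hy) hu.1)
  simp only [Lambda] at hdiff ⊢
  linarith

lemma one_sub_Fcdf (i : Fin k) (y : ℝ) : 1 - Fcdf lam i y = exp (-Lambda lam i y) := by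
  simp [Fcdf]

lemma fdens_div_one_sub_Fcdf_nonneg (hnn : ∀ i j : Fin k, i ≠ j → ∀ y : ℝ, 0 < y → 0 ≤ lam i j y)
    (i : Fin k) {y z : ℝ} (hz : 0 < z) : 0 ≤ fdens lam i z / (1 - Fcdf lam i y) := by
  rw [fdens, one_sub_Fcdf]
  have := sumLam_nonneg hnn i hz
  positivity

lemma fdens_div_one_sub_Fcdf_le (hmeas : ∀ i j : Fin k, i ≠ j → Measurable (lam i j))
    (hnn : ∀ i j : Fin k, i ≠ j → ∀ y : ℝ, 0 < y → 0 ≤ lam i j y) (hc : 0 ≤ c)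
    (hbound : ∀ i : Fin k, ∀ y : ℝ, 0 < y → sumLam lam i y ≤ c) (i : Fin k) {y z : ℝ}
    (hy : 0 ≤ y) (hyz : y < z) : fdens lam i z / (1 - Fcdf lam i y) ≤ c := by
  have hz : 0 < z := hy.trans_lt hyz
  rw [fdens, one_sub_Fcdf, div_le_iff₀ (exp_pos _)]
  calc sumLam lam i z * exp (-Lambda lam i z) ≤ c * exp (-Lambda lam i y) :=
        mul_le_mul (hbound i z hz) (exp_le_exp.mpr (neg_le_neg
          (monotoneOn_Lambda hmeas hnn hbound i hy hz.le hyz.le))) (exp_pos _).le hc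

lemma pMat_nonneg (hnn : ∀ i j : Fin k, i ≠ j → ∀ y : ℝ, 0 < y → 0 ≤ lam i j y)
    (i j : Fin k) {z : ℝ} (hz : 0 < z) : 0 ≤ pMat lam i j z := by
  unfold pMat
  split_ifs with hji
  · exact zero_le_one
  · exact le_rfl
  · exact le_rfl
  · exact div_nonneg (hnn i j (Ne.symm hji) z hz) (sumLam_nonneg hnn i hz)

lemma sum_pMat_le_one (i : Fin k) (z : ℝ) :
    ∑ j ∈ Finset.univ.filter (fun j => j ≠ i), pMat lam i j z ≤ 1 := by
  have hoff : ∀ j ∈ Finset.univ.filter (fun j => j ≠ i),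
      pMat lam i j z = if sumLam lam i z = 0 then 0 else lam i j z / sumLam lam i z :=
    fun j hj => if_neg (Finset.mem_filter.mp hj).2
  rw [Finset.sum_congr rfl hoff]
  split_ifs with h0
  · simp
  · rw [← Finset.sum_div]
    exact (div_self h0).le

end Rates

-- `Aop … φ t s i y` unfolds to the survival term plus `∫ v in 0..(T - t)` of this integrand.
noncomputable def jumpIntegrand {k : ℕ} (lam : Fin k → Fin k → ℝ → ℝ) (r : Fin k → ℝ)
    (σ : ℝ → Fin k → ℝ) (φ : ℝ → ℝ → Fin k → ℝ → ℝ) (t s : ℝ) (i : Fin k) (y v : ℝ) : ℝ :=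
  exp (-(r i * v)) * (fdens lam i (y + v) / (1 - Fcdf lam i y)) *
    ∑ j ∈ Finset.univ.filter (fun j => j ≠ i),
      pMat lam i j (y + v) * ∫ x in Ioi 0, φ (t + v) x j 0 * alphaDens r σ x t s i v

section JumpIntegrand

variable {k : ℕ} {lam : Fin k → Fin k → ℝ → ℝ} {r : Fin k → ℝ} {σ : ℝ → Fin k → ℝ}
  {φ : ℝ → ℝ → Fin k → ℝ → ℝ} {t s : ℝ} {i : Fin k} {y v : ℝ}

lemma jumpIntegrand_nonneg (hnn : ∀ i j : Fin k, i ≠ j → ∀ y : ℝ, 0 < y → 0 ≤ lam i j y)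
    (hyv : 0 < y + v) (hφ : ∀ j x, 0 < x → 0 ≤ φ (t + v) x j 0) :
    0 ≤ jumpIntegrand lam r σ φ t s i y v := by
  refine mul_nonneg (mul_nonneg (exp_pos _).le (fdens_div_one_sub_Fcdf_nonneg hnn i hyv))
    (Finset.sum_nonneg fun j _ => mul_nonneg (pMat_nonneg hnn i j hyv) ?_)
  exact setIntegral_nonneg measurableSet_Ioi fun x hx =>
    mul_nonneg (hφ j x hx) (alphaDens_nonneg (le_of_lt hx))

lemma neg_jumpIntegrand_le {c m : ℝ} (hmeas : ∀ i j : Fin k, i ≠ j → Measurable (lam i j))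
    (hnn : ∀ i j : Fin k, i ≠ j → ∀ y : ℝ, 0 < y → 0 ≤ lam i j y) (hc : 0 ≤ c)
    (hbound : ∀ i : Fin k, ∀ y : ℝ, 0 < y → sumLam lam i y ≤ c) (hr : 0 ≤ r i)
    (hy : 0 ≤ y) (hv : 0 < v) (hs : 0 < s) (hm : 0 ≤ m)
    (hφ : ∀ j x, 0 < x → -φ (t + v) x j 0 ≤ m * (1 + x)) :
    -jumpIntegrand lam r σ φ t s i y v ≤ c * (m * (1 + s)) := by
  have hyv : y < y + v := lt_add_of_pos_right y hv
  have hdisc : ∀ j, exp (-(r i * v)) * -∫ x in Ioi 0, φ (t + v) x j 0 * alphaDens r σ x t s i v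
      ≤ m * (1 + s) := fun j => calc
    _ ≤ exp (-(r i * v)) * (m * (1 + s * exp (r i * v))) :=
        mul_le_mul_of_nonneg_left (neg_integral_mul_alphaDens_le hs hm (hφ j)) (exp_pos _).le
    _ = m * (exp (-(r i * v)) + s) := by rw [exp_neg]; field_simp
    _ ≤ m * (1 + s) := by gcongr; exact exp_le_one_iff.mpr (by nlinarith)
  have hsum : ∑ j ∈ Finset.univ.filter (fun j => j ≠ i), pMat lam i j (y + v) *
      (exp (-(r i * v)) * -∫ x in Ioi 0, φ (t + v) x j 0 * alphaDens r σ x t s i v)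
      ≤ m * (1 + s) := calc
    _ ≤ ∑ j ∈ Finset.univ.filter (fun j => j ≠ i), pMat lam i j (y + v) * (m * (1 + s)) :=
        Finset.sum_le_sum fun j _ => mul_le_mul_of_nonneg_left (hdisc j)
          (pMat_nonneg hnn i j (hy.trans_lt hyv))
    _ ≤ 1 * (m * (1 + s)) := by
        rw [← Finset.sum_mul]
        exact mul_le_mul_of_nonneg_right (sum_pMat_le_one i _) (by positivity)
    _ = m * (1 + s) := one_mul _
  calc -jumpIntegrand lam r σ φ t s i y v
      = fdens lam i (y + v) / (1 - Fcdf lam i y) *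
          ∑ j ∈ Finset.univ.filter (fun j => j ≠ i), pMat lam i j (y + v) *
            (exp (-(r i * v)) * -∫ x in Ioi 0, φ (t + v) x j 0 * alphaDens r σ x t s i v) := by
        simp only [jumpIntegrand, Finset.mul_sum]
        rw [← Finset.sum_neg_distrib]
        exact Finset.sum_congr rfl fun j _ => by ring
    _ ≤ fdens lam i (y + v) / (1 - Fcdf lam i y) * (m * (1 + s)) :=
        mul_le_mul_of_nonneg_left hsum (fdens_div_one_sub_Fcdf_nonneg hnn i (hy.trans_lt hyv))
    _ ≤ c * (m * (1 + s)) :=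
        mul_le_mul_of_nonneg_right (fdens_div_one_sub_Fcdf_le hmeas hnn hc hbound i hy hyv)
          (by positivity)

end JumpIntegrand

section Positivity

variable {k : ℕ} {lam : Fin k → Fin k → ℝ → ℝ} {r : Fin k → ℝ} {σ : ℝ → Fin k → ℝ}
  {ρ : Fin k → ℝ → ℝ → ℝ} {T c : ℝ} {φ : ℝ → ℝ → Fin k → ℝ → ℝ}

lemma neg_le_half_of_nonneg_from (hmeas : ∀ i j : Fin k, i ≠ j → Measurable (lam i j))
    (hnn : ∀ i j : Fin k, i ≠ j → ∀ y : ℝ, 0 < y → 0 ≤ lam i j y) (hc : 0 < c)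
    (hbound : ∀ i : Fin k, ∀ y : ℝ, 0 < y → sumLam lam i y ≤ c) (hr : ∀ i : Fin k, 0 ≤ r i)
    (hρ : ∀ i, ∀ t ∈ Icc (0 : ℝ) T, ∀ s ∈ Ici (0 : ℝ), 0 ≤ ρ i t s)
    (hIE : ∀ t s y : ℝ, memDbar T t s y → ∀ i : Fin k, φ t s i y = Aop lam r σ ρ T φ t s i y)
    {τ m : ℝ} (hτ : τ ≤ T) (hm : 0 ≤ m)
    (hpos : ∀ t s y, memDbar T t s y → τ ≤ t → 0 < s → ∀ i, 0 ≤ φ t s i y)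
    (hbd : ∀ t s y, memDbar T t s y → τ - (2 * c)⁻¹ ≤ t → 0 < s → ∀ i,
      -φ t s i y ≤ m * (1 + s))
    {t s y : ℝ} (hmem : memDbar T t s y) (ht : τ - (2 * c)⁻¹ ≤ t) (hs : 0 < s) (i : Fin k) :
    -φ t s i y ≤ m / 2 * (1 + s) := by
  have hhalf_nonneg : 0 ≤ m / 2 * (1 + s) := by positivity
  rcases le_or_gt τ t with htτ | htτ
  · linarith [hpos t s y hmem htτ hs i]
  obtain ⟨⟨ht0, htT⟩, -, hy0, -⟩ := id hmem
  set g := jumpIntegrand lam r σ φ t s i y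
  set w := τ - t
  have hw : 0 < w := sub_pos.mpr htτ
  have hwT : w ≤ T - t := by linarith
  have hA : 0 ≤ (1 - Fcdf lam i (T - t + y)) / (1 - Fcdf lam i y) * ρ i t s := by
    rw [one_sub_Fcdf, one_sub_Fcdf]
    exact mul_nonneg (by positivity) (hρ i t ⟨ht0, htT⟩ s hs.le)
  have hφ : φ t s i y = (1 - Fcdf lam i (T - t + y)) / (1 - Fcdf lam i y) * ρ i t s
      + ∫ v in (0 : ℝ)..(T - t), g v := hIE t s y hmem i
  by_cases hg : IntervalIntegrable g volume 0 (T - t)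
  swap
  · rw [intervalIntegral.integral_undef hg] at hφ
    linarith
  have hnear : -∫ v in (0 : ℝ)..w, g v ≤ c * (m * (1 + s)) * w := by
    rw [← intervalIntegral.integral_neg]
    calc ∫ v in (0 : ℝ)..w, -g v ≤ ∫ v in (0 : ℝ)..w, c * (m * (1 + s)) := by
          refine intervalIntegral.integral_mono_on_of_le_Ioo hw.le
            (hg.mono_set (uIcc_subset_uIcc left_mem_uIcc (mem_uIcc_of_le hw.le hwT))).neg
            intervalIntegrable_const fun v hv => ?_
          refine neg_jumpIntegrand_le hmeas hnn hc.le hbound (hr i) hy0 hv.1 hs hm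
            fun j x hx => hbd (t + v) x 0 ?_ (by linarith [hv.1]) hx j
          exact ⟨⟨by linarith [hv.1], by linarith [hv.2]⟩, hx.le, le_rfl, by linarith [hv.1]⟩
      _ = c * (m * (1 + s)) * w := by rw [intervalIntegral.integral_const, smul_eq_mul]; ring
  have hfar : 0 ≤ ∫ v in w..(T - t), g v := by
    refine intervalIntegral.integral_nonneg hwT fun v hv => jumpIntegrand_nonneg hnn
      (by linarith [hv.1]) fun j x hx => hpos (t + v) x 0 ?_ (by linarith [hv.1]) hx j
    exact ⟨⟨by linarith [hv.1], by linarith [hv.2]⟩, hx.le, le_rfl, by linarith [hv.1]⟩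
  have hsmall : c * (m * (1 + s)) * w ≤ m / 2 * (1 + s) := calc
    _ ≤ c * (m * (1 + s)) * (2 * c)⁻¹ := by gcongr; linarith
    _ = m / 2 * (1 + s) := by field_simp
  rw [← intervalIntegral.integral_add_adjacent_intervals
    (hg.mono_set (uIcc_subset_uIcc left_mem_uIcc (mem_uIcc_of_le hw.le hwT)))
    (hg.mono_set (uIcc_subset_uIcc (mem_uIcc_of_le hw.le hwT) right_mem_uIcc))] at hφ
  linarith

lemma nonneg_of_nonneg_from (hmeas : ∀ i j : Fin k, i ≠ j → Measurable (lam i j))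
    (hnn : ∀ i j : Fin k, i ≠ j → ∀ y : ℝ, 0 < y → 0 ≤ lam i j y) (hc : 0 < c)
    (hbound : ∀ i : Fin k, ∀ y : ℝ, 0 < y → sumLam lam i y ≤ c) (hr : ∀ i : Fin k, 0 ≤ r i)
    (hρ : ∀ i, ∀ t ∈ Icc (0 : ℝ) T, ∀ s ∈ Ici (0 : ℝ), 0 ≤ ρ i t s)
    (hIE : ∀ t s y : ℝ, memDbar T t s y → ∀ i : Fin k, φ t s i y = Aop lam r σ ρ T φ t s i y)
    {M : ℝ} (hM : ∀ t s y : ℝ, memDbar T t s y → ∀ i : Fin k, |φ t s i y| ≤ M * (1 + s))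
    {τ : ℝ} (hτ : τ ≤ T) (hpos : ∀ t s y, memDbar T t s y → τ ≤ t → 0 < s → ∀ i, 0 ≤ φ t s i y)
    {t s y : ℝ} (hmem : memDbar T t s y) (ht : τ - (2 * c)⁻¹ ≤ t) (hs : 0 < s) (i : Fin k) :
    0 ≤ φ t s i y := by
  have hhalving : ∀ n : ℕ, ∀ t s y, memDbar T t s y → τ - (2 * c)⁻¹ ≤ t → 0 < s → ∀ i,
      -φ t s i y ≤ max M 0 * (1 / 2) ^ n * (1 + s) := by
    intro n
    induction n with
    | zero =>
      intro t s y hmem _ hs i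
      have : M * (1 + s) ≤ max M 0 * (1 + s) := by gcongr; exact le_max_left M 0
      linarith [neg_le_abs (φ t s i y), hM t s y hmem i]
    | succ n ih =>
      intro t s y hmem ht hs i
      have := neg_le_half_of_nonneg_from hmeas hnn hc hbound hr hρ hIE hτ (by positivity) hpos ih
        hmem ht hs i
      rw [pow_succ]
      linarith
  have hlim : Tendsto (fun n : ℕ => max M 0 * (1 / 2) ^ n * (1 + s)) atTop (nhds 0) := by
    simpa using ((tendsto_pow_atTop_nhds_zero_of_lt_one (by norm_num : (0 : ℝ) ≤ 1 / 2)
      (by norm_num)).const_mul (max M 0)).mul_const (1 + s)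
  linarith [ge_of_tendsto' hlim fun n => hhalving n t s y hmem ht hs i]

lemma nonneg_at_maturity (hρ : ∀ i, ∀ t ∈ Icc (0 : ℝ) T, ∀ s ∈ Ici (0 : ℝ), 0 ≤ ρ i t s)
    (hIE : ∀ t s y : ℝ, memDbar T t s y → ∀ i : Fin k, φ t s i y = Aop lam r σ ρ T φ t s i y)
    {s y : ℝ} (hmem : memDbar T T s y) (i : Fin k) : 0 ≤ φ T s i y := by
  rw [hIE T s y hmem i, Aop, sub_self, intervalIntegral.integral_same, add_zero, one_sub_Fcdf,
    one_sub_Fcdf]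
  exact mul_nonneg (by positivity) (hρ i T hmem.1 s hmem.2.1)

lemma nonneg_of_pos (hmeas : ∀ i j : Fin k, i ≠ j → Measurable (lam i j))
    (hnn : ∀ i j : Fin k, i ≠ j → ∀ y : ℝ, 0 < y → 0 ≤ lam i j y) (hc : 0 < c)
    (hbound : ∀ i : Fin k, ∀ y : ℝ, 0 < y → sumLam lam i y ≤ c) (hr : ∀ i : Fin k, 0 ≤ r i)
    (hρ : ∀ i, ∀ t ∈ Icc (0 : ℝ) T, ∀ s ∈ Ici (0 : ℝ), 0 ≤ ρ i t s)
    (hIE : ∀ t s y : ℝ, memDbar T t s y → ∀ i : Fin k, φ t s i y = Aop lam r σ ρ T φ t s i y)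
    {M : ℝ} (hM : ∀ t s y : ℝ, memDbar T t s y → ∀ i : Fin k, |φ t s i y| ≤ M * (1 + s))
    {t s y : ℝ} (hmem : memDbar T t s y) (hs : 0 < s) (i : Fin k) : 0 ≤ φ t s i y := by
  have hsteps : ∀ n : ℕ, ∀ t s y, memDbar T t s y → T - n * (2 * c)⁻¹ ≤ t → 0 < s → ∀ i,
      0 ≤ φ t s i y := by
    intro n
    induction n with
    | zero =>
      intro t s y hmem ht _ i
      obtain rfl : t = T := le_antisymm hmem.1.2 (by simpa using ht)
      exact nonneg_at_maturity hρ hIE hmem i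
    | succ n ih =>
      intro t s y hmem ht hs i
      refine nonneg_of_nonneg_from hmeas hnn hc hbound hr hρ hIE hM ?_ ih hmem ?_ hs i
      · have : 0 ≤ (n : ℝ) * (2 * c)⁻¹ := by positivity
        linarith
      · push_cast at ht
        linarith
  obtain ⟨n, hn⟩ := exists_nat_ge (2 * c * T)
  refine hsteps n t s y hmem ?_ hs i
  have : T ≤ n * (2 * c)⁻¹ := by
    rw [le_mul_inv_iff₀ (by positivity)]
    linarith
  linarith [hmem.1.1]

end Positivity

lemma nonneg_of_continuousOn_of_pos {k : ℕ} {T : ℝ} {φ : ℝ → ℝ → Fin k → ℝ → ℝ} {i : Fin k}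
    (hcont : ContinuousOn (fun p : ℝ × ℝ × ℝ => φ p.1 p.2.1 i p.2.2)
      {p : ℝ × ℝ × ℝ | memDbar T p.1 p.2.1 p.2.2})
    (hpos : ∀ t s y, memDbar T t s y → 0 < s → 0 ≤ φ t s i y)
    {t s y : ℝ} (hmem : memDbar T t s y) : 0 ≤ φ t s i y := by
  rcases (mem_Ici.mp hmem.2.1).eq_or_lt with rfl | hs
  · have hpath : Tendsto (fun u : ℝ => (t, u, y)) (nhdsWithin 0 (Ioi 0))
        (nhdsWithin (t, 0, y) {p : ℝ × ℝ × ℝ | memDbar T p.1 p.2.1 p.2.2}) :=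
      tendsto_nhdsWithin_iff.mpr
        ⟨((by fun_prop : Continuous fun u : ℝ => (t, u, y)).tendsto 0).mono_left nhdsWithin_le_nhds, eventually_mem_nhdsWithin.mono fun u (hu : 0 < u) =>
          (⟨hmem.1, hu.le, hmem.2.2⟩ : memDbar T t u y)⟩
    exact ge_of_tendsto ((hcont _ hmem).tendsto.comp hpath) (eventually_mem_nhdsWithin.mono
      fun u (hu : 0 < u) => hpos t u y ⟨hmem.1, hu.le, hmem.2.2⟩ hu)
  · exact hpos t s y hmem hs

theorem stmt_9_general {k : ℕ} (lam : Fin k → Fin k → ℝ → ℝ)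
    (hmeas : ∀ i j : Fin k, i ≠ j → Measurable (lam i j))
    (hnn : ∀ i j : Fin k, i ≠ j → ∀ y : ℝ, 0 < y → 0 ≤ lam i j y)
    (c : ℝ) (hc : 0 < c)
    (hbound : ∀ i : Fin k, ∀ y : ℝ, 0 < y → sumLam lam i y ≤ c)
    (r : Fin k → ℝ) (hr : ∀ i : Fin k, 0 ≤ r i)
    (σ : ℝ → Fin k → ℝ)
    (T : ℝ)
    (K : ℝ → ℝ)
    (ρ : Fin k → ℝ → ℝ → ℝ) (hρ : isBSMSolution r σ K T ρ)
    :
    ∀ φ : ℝ → ℝ → Fin k → ℝ → ℝ,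
      memB T φ →
      (∀ t s y : ℝ, memDbar T t s y → ∀ i : Fin k,
        φ t s i y = Aop lam r σ ρ T φ t s i y) →
      ∀ t s y : ℝ, memDbar T t s y → ∀ i : Fin k, 0 ≤ φ t s i y := by
  rintro φ ⟨hcont, M, hM⟩ hIE t s y hmem i
  have hρ0 : ∀ i, ∀ t ∈ Icc (0 : ℝ) T, ∀ s ∈ Ici (0 : ℝ), 0 ≤ ρ i t s := fun i => (hρ i).2.1
  exact nonneg_of_continuousOn_of_pos (hcont i)
    (fun t s y hmem hs => nonneg_of_pos hmeas hnn hc hbound hr hρ0 hIE hM hmem hs i) hmem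

theorem stmt_9 {k : ℕ} (lam : Fin k → Fin k → ℝ → ℝ)
    (hmeas : ∀ i j : Fin k, i ≠ j → Measurable (lam i j))
    (hnn : ∀ i j : Fin k, i ≠ j → ∀ y : ℝ, 0 < y → 0 ≤ lam i j y)
    (c : ℝ) (hc : 0 < c)
    (hbound : ∀ i : Fin k, ∀ y : ℝ, 0 < y → sumLam lam i y ≤ c)
    (hinf : ∀ i : Fin k, Tendsto (Lambda lam i) atTop atTop)
    (r : Fin k → ℝ) (hr : ∀ i : Fin k, 0 ≤ r i)
    (σ : ℝ → Fin k → ℝ)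
    (hσpos : ∀ u : ℝ, 0 ≤ u → ∀ i : Fin k, 0 < σ u i)
    (hσcont : ∀ i : Fin k, ContinuousOn (fun u => σ u i) (Set.Ici 0))
    (T : ℝ) (hT : 0 < T)
    (K : ℝ → ℝ) (hKcont : ContinuousOn K (Set.Ici 0))
    (k₁ k₂ : ℝ) (hk₁ : 0 < k₁) (hk₂ : 0 < k₂)
    (hK : ∀ s : ℝ, 0 ≤ s → 0 ≤ K s ∧ K s ≤ k₁ + k₂ * s)
    (ρ : Fin k → ℝ → ℝ → ℝ) (hρ : isBSMSolution r σ K T ρ)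
    :
    ∀ φ : ℝ → ℝ → Fin k → ℝ → ℝ,
      memB T φ →
      (∀ t s y : ℝ, memDbar T t s y → ∀ i : Fin k,
        φ t s i y = Aop lam r σ ρ T φ t s i y) →
      ∀ t s y : ℝ, memDbar T t s y → ∀ i : Fin k, 0 ≤ φ t s i y :=
  stmt_9_general lam hmeas hnn c hc hbound r hr σ T K ρ hρ
end

section
/- Fix t ≥ 0, s > 0 and i ∈ χ, and let (u_l)_{l∈ℕ} be any decreasing sequence in (0,1) with u_l → 0. Then the family of densities α_l(x) := α(x;t,s,i,u_l) is uniformly integrable in the sense that lim_{k→∞} sup_{l∈ℕ} ∫_k^∞ x·α_l(x) dx = 0. -/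
open MeasureTheory Real Filter Set


lemma aux_exp_le {a : ℝ} (ha : 0 < a) : Real.exp (-a) ≤ a⁻¹ := by
  rw [Real.exp_neg]
  have h : a ≤ Real.exp a := by linarith [Real.add_one_le_exp a]
  exact inv_anti₀ ha h

lemma aux_bound {w sb M : ℝ} (hM : 0 < M) (hsb : 0 < sb) (hsbM : sb^2 ≤ M)
    (hw1 : 1 ≤ w) (hw8 : 8*M ≤ w) :
    Real.exp (-(w/sb)^2/2) / sb ≤ 4 * Real.sqrt M * Real.exp (-(2*w)) := by
  have hw0 : 0 < w := lt_of_lt_of_le one_pos hw1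
  have h1 : (-(w/sb)^2/2) = -(w^2/(4*sb^2)) + -(w^2/(4*sb^2)) := by
    field_simp
    ring
  rw [h1, Real.exp_add]
  have ha : 0 < w^2/(4*sb^2) := by positivity
  have h2 : Real.exp (-(w^2/(4*sb^2))) ≤ 4*sb^2/w^2 := by
    have h := aux_exp_le ha
    rwa [inv_div] at h
  have h3 : Real.exp (-(w^2/(4*sb^2))) ≤ Real.exp (-(2*w)) := by
    apply Real.exp_le_exp.mpr
    have hgoal : 2*w ≤ w^2/(4*sb^2) := by
      rw [le_div_iff₀ (by positivity)]
      nlinarith [mul_le_mul_of_nonneg_left hsbM (by linarith : (0:ℝ) ≤ 8*w),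
        mul_le_mul_of_nonneg_left hw8 hw0.le]
    linarith
  have hsbM' : sb ≤ Real.sqrt M := by
    rw [← Real.sqrt_sq hsb.le]
    exact Real.sqrt_le_sqrt hsbM
  have hE : 0 < Real.exp (-(2*w)) := Real.exp_pos _
  calc Real.exp (-(w^2/(4*sb^2))) * Real.exp (-(w^2/(4*sb^2))) / sb
      ≤ (4*sb^2/w^2) * Real.exp (-(2*w)) / sb := by
        apply div_le_div_of_nonneg_right ?_ hsb.le
        exact mul_le_mul h2 h3 (Real.exp_pos _).le (by positivity)
    _ = 4*sb*Real.exp (-(2*w))/w^2 := by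
        field_simp
    _ ≤ 4*sb*Real.exp (-(2*w))/1 := by
        apply div_le_div_of_nonneg_left (by positivity) one_pos
        nlinarith
    _ = 4*sb*Real.exp (-(2*w)) := by rw [div_one]
    _ ≤ 4 * Real.sqrt M * Real.exp (-(2*w)) := by
        have : (4:ℝ)*sb ≤ 4*Real.sqrt M := by linarith
        exact mul_le_mul_of_nonneg_right this hE.le

theorem stmt_10 {k : ℕ} (r : Fin k → ℝ) (σ : ℝ → Fin k → ℝ)
    (hr : ∀ i : Fin k, 0 ≤ r i)
    (hσpos : ∀ w : ℝ, 0 ≤ w → ∀ i : Fin k, 0 < σ w i)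
    (hσcont : ∀ i : Fin k, ContinuousOn (fun w => σ w i) (Set.Ici 0))
    (t s : ℝ) (ht : 0 ≤ t) (hs : 0 < s) (i : Fin k)
    (u : ℕ → ℝ) (hanti : StrictAnti u) (hmem : ∀ l : ℕ, u l ∈ Set.Ioo (0:ℝ) 1)
    (hlim : Tendsto u atTop (nhds 0)) :
    Tendsto (fun K : ℝ => ⨆ l : ℕ, ∫ x in Set.Ioi K, x * alphaDens r σ x t s i (u l))
      atTop (nhds 0) := by
  obtain ⟨M0, hM0⟩ := (isCompact_Icc : IsCompact (Icc t (t+1))).exists_bound_of_continuousOn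
    ((hσcont i).mono (fun w hw => le_trans ht hw.1))
  set M : ℝ := max (M0^2) 1 with hMdef
  have hM1 : (1:ℝ) ≤ M := le_max_right _ _
  have hM : 0 < M := lt_of_lt_of_le one_pos hM1
  have hMbound : ∀ w ∈ Icc t (t+1), (σ w i)^2 ≤ M := by
    intro w hw
    have h := hM0 w hw
    calc (σ w i)^2 = |σ w i|^2 := (sq_abs _).symm
      _ ≤ M0^2 := by
          apply pow_le_pow_left₀ (abs_nonneg _)
          simpa using h
      _ ≤ M := le_max_left _ _
  set C2 : ℝ := 4 * Real.sqrt M * s^2 * Real.exp (2 * r i) / Real.sqrt (2*Real.pi) with hC2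
  have hC2pos : 0 ≤ C2 := by positivity
  set K2 : ℝ := Real.exp (max 1 (8*M) + Real.log s + r i) with hK2
  have key : ∀ l : ℕ, ∀ x : ℝ, K2 < x → x * alphaDens r σ x t s i (u l) ≤ C2 / x^2 := by
    intro l x hx
    have hx0 : 0 < x := lt_trans (Real.exp_pos _) hx
    obtain ⟨hv0, hv1⟩ := hmem l
    set v := u l with hvdef
    have hvt : t ≤ t + v := by linarith
    have hsub : Icc t (t+v) ⊆ Icc t (t+1) := Icc_subset_Icc le_rfl (by linarith)
    have hcont : ContinuousOn (fun w => σ w i) (Icc t (t+v)) :=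
      (hσcont i).mono (fun w hw => le_trans ht hw.1)
    have hint : IntervalIntegrable (fun w => (σ w i)^2) volume t (t+v) := by
      apply ContinuousOn.intervalIntegrable
      rw [uIcc_of_le hvt]
      exact hcont.pow 2
    have hI0 : 0 ≤ ∫ w in t..(t+v), (σ w i)^2 :=
      intervalIntegral.integral_nonneg hvt (fun w _ => sq_nonneg _)
    have hIM : (∫ w in t..(t+v), (σ w i)^2) ≤ M := by
      calc (∫ w in t..(t+v), (σ w i)^2) ≤ ∫ _ in t..(t+v), M :=
            intervalIntegral.integral_mono_on hvt hint intervalIntegrable_const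
              (fun w hw => hMbound w (hsub hw))
        _ = v * M := by rw [intervalIntegral.integral_const, smul_eq_mul]; ring_nf
        _ ≤ 1 * M := mul_le_mul_of_nonneg_right hv1.le hM.le
        _ = M := one_mul _
    have hsb2 : (sigbar σ t i v)^2 ≤ M := by
      rw [sigbar, Real.sq_sqrt hI0]; exact hIM
    have hsb0 : 0 ≤ sigbar σ t i v := Real.sqrt_nonneg _
    have hm : (∫ w in t..(t+v), (r i - (σ w i)^2/2)) ≤ r i := by
      have hint2 : IntervalIntegrable (fun w => r i - (σ w i)^2/2) volume t (t+v) := by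
        apply ContinuousOn.intervalIntegrable
        rw [uIcc_of_le hvt]
        exact continuousOn_const.sub ((hcont.pow 2).div_const 2)
      calc (∫ w in t..(t+v), (r i - (σ w i)^2/2)) ≤ ∫ _ in t..(t+v), r i :=
            intervalIntegral.integral_mono_on hvt hint2 intervalIntegrable_const
              (fun w _ => by nlinarith [sq_nonneg (σ w i)])
        _ = v * r i := by rw [intervalIntegral.integral_const, smul_eq_mul]; ring_nf
        _ ≤ 1 * r i := mul_le_mul_of_nonneg_right hv1.le (hr i)
        _ = r i := one_mul _
    set w := Real.log x - Real.log s - r i with hwdef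
    have hw : max 1 (8*M) ≤ w := by
      have hlog : max 1 (8*M) + Real.log s + r i < Real.log x := by
        rw [← Real.log_exp (max 1 (8*M) + Real.log s + r i)]
        exact Real.log_lt_log (Real.exp_pos _) hx
      rw [hwdef]; linarith
    have hw1 : 1 ≤ w := le_trans (le_max_left _ _) hw
    have hw8 : 8*M ≤ w := le_trans (le_max_right _ _) hw
    rcases eq_or_lt_of_le hsb0 with hsb | hsb
    · simp only [alphaDens, ← hsb, mul_zero, div_zero]
      positivity
    · have hwle : w ≤ Real.log (x/s) - ∫ w in t..(t+v), (r i - (σ w i)^2/2) := by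
        rw [Real.log_div hx0.ne' hs.ne']
        linarith
      have hL : w / sigbar σ t i v ≤ Lfun r σ t x s i v := by
        rw [Lfun]
        exact div_le_div_of_nonneg_right hwle hsb0
      have hL0 : 0 ≤ w / sigbar σ t i v := by positivity
      have hexp : Real.exp (-(Lfun r σ t x s i v)^2/2) ≤ Real.exp (-(w/sigbar σ t i v)^2/2) := by
        apply Real.exp_le_exp.mpr
        have := pow_le_pow_left₀ hL0 hL 2
        linarith
      have hmain := aux_bound hM hsb hsb2 hw1 hw8
      have h2pi : 0 < Real.sqrt (2*Real.pi) := Real.sqrt_pos.mpr (by positivity)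
      have hxa : x * alphaDens r σ x t s i v =
          Real.exp (-(Lfun r σ t x s i v)^2/2) / (Real.sqrt (2*Real.pi) * sigbar σ t i v) := by
        rw [alphaDens]
        field_simp
      rw [hxa]
      have hew : Real.exp (-(2*w)) = s^2 * Real.exp (2*r i) / x^2 := by
        have he : -(2*w) = (Real.log s + Real.log s) + 2*(r i) - (Real.log x + Real.log x) := by
          rw [hwdef]; ring
        rw [he, Real.exp_sub, Real.exp_add, Real.exp_add, Real.exp_add,
          Real.exp_log hs, Real.exp_log hx0]
        ring
      calc Real.exp (-(Lfun r σ t x s i v)^2/2) / (Real.sqrt (2*Real.pi) * sigbar σ t i v)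
          ≤ Real.exp (-(w/sigbar σ t i v)^2/2) / (Real.sqrt (2*Real.pi) * sigbar σ t i v) := by
            apply div_le_div_of_nonneg_right hexp (by positivity)
        _ = (Real.exp (-(w/sigbar σ t i v)^2/2) / sigbar σ t i v) / Real.sqrt (2*Real.pi) := by
            field_simp
        _ ≤ (4 * Real.sqrt M * Real.exp (-(2*w))) / Real.sqrt (2*Real.pi) := by
            apply div_le_div_of_nonneg_right hmain h2pi.le
        _ = C2 / x^2 := by
            rw [hew, hC2]
            field_simp
  have hαnn : ∀ l : ℕ, ∀ x : ℝ, 0 < x → 0 ≤ x * alphaDens r σ x t s i (u l) := by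
    intro l x hx
    apply mul_nonneg hx.le
    simp only [alphaDens]
    apply div_nonneg (Real.exp_pos _).le
    apply mul_nonneg (mul_nonneg (Real.sqrt_nonneg _) hx.le)
    exact Real.sqrt_nonneg _
  have hInt2 : ∀ K : ℝ, 0 < K → IntegrableOn (fun x => C2/x^2) (Ioi K) := by
    intro K hK
    have h := (integrableOn_Ioi_rpow_of_lt (by norm_num : (-2:ℝ) < -1) hK).const_mul C2
    apply MeasureTheory.IntegrableOn.congr_fun h ?_ measurableSet_Ioi
    intro x hx
    have hx0 : 0 < x := lt_trans hK hx
    show C2 * x ^ ((-2:ℝ)) = C2 / x^2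
    rw [Real.rpow_neg hx0.le, show ((2:ℝ) = ((2:ℕ):ℝ)) by norm_num, Real.rpow_natCast]
    rw [div_eq_mul_inv]
  have hIval : ∀ K : ℝ, 0 < K → (∫ x in Ioi K, C2/x^2) = C2/K := by
    intro K hK
    have heq : ∀ x ∈ Ioi K, C2/x^2 = C2 * x^((-2:ℝ)) := by
      intro x hx
      have hx0 : 0 < x := lt_trans hK hx
      rw [Real.rpow_neg hx0.le, show ((2:ℝ) = ((2:ℕ):ℝ)) by norm_num, Real.rpow_natCast]
      rw [div_eq_mul_inv]
    rw [setIntegral_congr_fun measurableSet_Ioi heq, integral_const_mul,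
      integral_Ioi_rpow_of_lt (by norm_num) hK]
    rw [show ((-2:ℝ)+1 = -1) by norm_num, Real.rpow_neg_one]
    field_simp
  have hbound : ∀ K : ℝ, max K2 1 ≤ K → ∀ l : ℕ,
      (∫ x in Ioi K, x * alphaDens r σ x t s i (u l)) ≤ C2/K := by
    intro K hK l
    have hK1 : (1:ℝ) ≤ K := le_trans (le_max_right _ _) hK
    have hK0 : 0 < K := lt_of_lt_of_le one_pos hK1
    rw [← hIval K hK0]
    apply integral_mono_of_nonneg
    · filter_upwards [ae_restrict_mem measurableSet_Ioi] with x hx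
      exact hαnn l x (lt_trans hK0 hx)
    · exact hInt2 K hK0
    · filter_upwards [ae_restrict_mem measurableSet_Ioi] with x hx
      exact key l x (lt_of_le_of_lt (le_trans (le_max_left _ _) hK) hx)
  have hupper : Tendsto (fun K : ℝ => C2/K) atTop (nhds 0) := by
    simpa using tendsto_const_nhds.div_atTop (tendsto_id : Tendsto (fun K : ℝ => K) atTop atTop)
  apply tendsto_of_tendsto_of_tendsto_of_le_of_le' tendsto_const_nhds hupper
  · filter_upwards [eventually_ge_atTop (max K2 1)] with K hK
    have hK1 : (1:ℝ) ≤ K := le_trans (le_max_right _ _) hK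
    have hK0 : 0 < K := lt_of_lt_of_le one_pos hK1
    have hbdd : BddAbove (range fun l : ℕ => ∫ x in Ioi K, x * alphaDens r σ x t s i (u l)) := by
      refine ⟨C2/K, ?_⟩
      rintro y ⟨l, rfl⟩
      exact hbound K hK l
    calc (0:ℝ) ≤ ∫ x in Ioi K, x * alphaDens r σ x t s i (u 0) := by
          apply setIntegral_nonneg measurableSet_Ioi
          intro x hx
          exact hαnn 0 x (lt_trans hK0 hx)
      _ ≤ _ := le_ciSup hbdd 0
  · filter_upwards [eventually_ge_atTop (max K2 1)] with K hK
    exact ciSup_le (fun l => hbound K hK l)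
end

section
/- Let T > 0 and let φ : [0,T]×[0,∞) → [0,∞) be continuous with φ(t,x) ≤ k₁ + k₂·x for all (t,x) and some constants k₁, k₂ > 0. Then for every t ∈ [0,T), every s > 0 and every i, j ∈ χ one has lim_{u↓0} ∫_0^∞ φ(t+u,x)·α(x;t,s,i,u) dx = φ(t,s). -/
open MeasureTheory Real Filter Set


/-!
Substituting `x = s * exp (m + σ̄ z)`, where `m = ∫_t^{t+u} (r − σ²/2)` is the log-drift, turns
`α(x; t, s, i, u) dx` into the standard Gaussian measure, so the integral is
`𝔼[φ(t + u, s * exp (m + σ̄ Z))]` for `Z ~ N(0, 1)`. As `u ↓ 0` both `m` and `σ̄` tend to `0`, so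
the integrand tends to `φ(t, s)` pointwise, and the linear growth of `φ` yields the majorant
`k₁ + k₂ s e * exp |z|`, which is Gaussian-integrable; dominated convergence concludes.
-/
open ProbabilityTheory
open scoped NNReal Topology

theorem integral_Ioi_zero_eq_integral_mul_exp_affine {E : Type*} [NormedAddCommGroup E]
    [NormedSpace ℝ E] (G : ℝ → E) {s c : ℝ} (hs : 0 < s) (hc : 0 < c) (m : ℝ) :
    ∫ x in Ioi 0, G x = ∫ z, (c * (s * exp (m + c * z))) • G (s * exp (m + c * z)) := by
  set g : ℝ → ℝ := fun z => s * exp (m + c * z)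
  have hrange : range g = Ioi 0 := by
    ext y
    refine ⟨by rintro ⟨z, rfl⟩; exact mul_pos hs (exp_pos _), fun hy => ?_⟩
    refine ⟨(log (y / s) - m) / c, ?_⟩
    simp only [g, mul_div_cancel₀ _ hc.ne', add_sub_cancel, exp_log (div_pos hy hs),
      mul_div_cancel₀ _ hs.ne']
  have hderiv (z : ℝ) : HasDerivAt g (c * g z) z :=
    ((((hasDerivAt_id z).const_mul c).const_add m).exp.const_mul s).congr_deriv
      (by simp only [id_eq, mul_one, g]; ring)
  have hmono : StrictMono g := fun a b hab => by simp only [g]; gcongr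
  rw [← hrange, ← image_univ, integral_image_eq_integral_abs_deriv_smul MeasurableSet.univ
    (fun z _ => (hderiv z).hasDerivWithinAt) hmono.injective.injOn, Measure.restrict_univ]
  simp only [abs_of_pos (mul_pos hc (mul_pos hs (exp_pos _))), g]

theorem integrable_exp_abs_gaussianReal (μ : ℝ) (v : ℝ≥0) :
    Integrable (fun x => exp |x|) (gaussianReal μ v) := by
  refine ((integrable_exp_mul_gaussianReal 1).add (integrable_exp_mul_gaussianReal (-1))).mono'
    (by fun_prop) (ae_of_all _ fun x => ?_)
  simpa [abs_of_pos (exp_pos _)] using exp_abs_le x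

theorem tendsto_integral_gaussianReal_of_norm_le_exp_abs {ι : Type*} {l : Filter ι}
    [l.IsCountablyGenerated] {μ : ℝ} {v : ℝ≥0} {F : ι → ℝ → ℝ} {L a b : ℝ}
    (hmeas : ∀ᶠ n in l, AEStronglyMeasurable (F n) (gaussianReal μ v))
    (hbound : ∀ᶠ n in l, ∀ z, ‖F n z‖ ≤ a + b * exp |z|)
    (hlim : ∀ z, Tendsto (F · z) l (𝓝 L)) :
    Tendsto (fun n => ∫ z, F n z ∂gaussianReal μ v) l (𝓝 L) := by
  have h := tendsto_integral_filter_of_dominated_convergence _ hmeas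
    (hbound.mono fun n hn => ae_of_all _ hn)
    ((integrable_const a).add ((integrable_exp_abs_gaussianReal μ v).const_mul b))
    (ae_of_all _ hlim)
  simpa using h

theorem tendsto_intervalIntegral_nhdsGT_zero {f : ℝ → ℝ} {t ε : ℝ} (hε : 0 < ε)
    (hf : IntervalIntegrable f volume t (t + ε)) :
    Tendsto (fun u => ∫ w in t..t + u, f w) (𝓝[>] 0) (𝓝 0) := by
  have hF := (intervalIntegral.continuousOn_primitive_interval' hf left_mem_uIcc)
    |>.continuousWithinAt (left_mem_uIcc (b := t + ε))
  have hshift : Tendsto (t + ·) (𝓝[>] 0) (𝓝[uIcc t (t + ε)] t) := by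
    refine tendsto_nhdsWithin_of_tendsto_nhds_of_eventually_within _ ?_ ?_
    · exact ((continuous_const_add t).tendsto' 0 t (add_zero t)).mono_left nhdsWithin_le_nhds
    · filter_upwards [Ioo_mem_nhdsGT hε] with u hu
      rw [uIcc_of_le (by linarith)]
      constructor <;> linarith [hu.1, hu.2]
  simpa [Function.comp_def] using hF.tendsto.comp hshift

section Lognormal

variable {k : ℕ} (r : Fin k → ℝ) (σ : ℝ → Fin k → ℝ) (t : ℝ) (i : Fin k)

noncomputable def logDrift (u : ℝ) : ℝ := ∫ w in t..t + u, (r i - σ w i ^ 2 / 2)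

variable {σ t i}

theorem sigbar_pos {u : ℝ} (hu : 0 < u) (hcont : ContinuousOn (σ · i) (Ici t))
    (hpos : ∀ w ≥ t, 0 < σ w i) : 0 < sigbar σ t i u := by
  refine sqrt_pos.2 (intervalIntegral.intervalIntegral_pos_of_pos_on ?_
    (fun w hw => pow_pos (hpos w hw.1.le) 2) (by linarith))
  refine ((hcont.pow 2).mono ?_).intervalIntegrable
  rw [uIcc_of_le (by linarith)]
  exact Icc_subset_Ici_self

theorem tendsto_sigbar_nhdsGT_zero (hcont : ContinuousOn (σ · i) (Ici t)) :
    Tendsto (sigbar σ t i) (𝓝[>] 0) (𝓝 0) := by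
  have h : Tendsto (fun u => ∫ w in t..t + u, σ w i ^ 2) (𝓝[>] 0) (𝓝 0) :=
    tendsto_intervalIntegral_nhdsGT_zero one_pos
      (((hcont.pow 2).mono Icc_subset_Ici_self).intervalIntegrable_of_Icc (by linarith))
  have h' := (continuous_sqrt.tendsto 0).comp h
  rw [sqrt_zero] at h'
  exact h'

theorem tendsto_logDrift_nhdsGT_zero (hcont : ContinuousOn (σ · i) (Ici t)) :
    Tendsto (logDrift r σ t i) (𝓝[>] 0) (𝓝 0) :=
  tendsto_intervalIntegral_nhdsGT_zero one_pos
    (((continuousOn_const.sub ((hcont.pow 2).div_const 2)).mono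
      Icc_subset_Ici_self).intervalIntegrable_of_Icc (by linarith))

theorem Lfun_mul_exp {s : ℝ} (hs : 0 < s) {u : ℝ} (hc : sigbar σ t i u ≠ 0) (z : ℝ) :
    Lfun r σ t (s * exp (logDrift r σ t i u + sigbar σ t i u * z)) s i u = z := by
  rw [Lfun, mul_div_cancel_left₀ _ hs.ne', log_exp, logDrift, add_sub_cancel_left,
    mul_div_cancel_left₀ _ hc]

theorem integral_mul_alphaDens_eq_integral_gaussianReal (G : ℝ → ℝ) {s : ℝ} (hs : 0 < s)
    {u : ℝ} (hc : 0 < sigbar σ t i u) :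
    ∫ x in Ioi 0, G x * alphaDens r σ x t s i u
      = ∫ z, G (s * exp (logDrift r σ t i u + sigbar σ t i u * z)) ∂gaussianReal 0 1 := by
  rw [integral_Ioi_zero_eq_integral_mul_exp_affine _ hs hc (logDrift r σ t i u),
    integral_gaussianReal_eq_integral_smul one_ne_zero]
  congr 1 with z
  rw [alphaDens, Lfun_mul_exp r hs hc.ne', gaussianPDFReal]
  simp only [smul_eq_mul, sub_zero, NNReal.coe_one, mul_one]
  field_simp

end Lognormal

theorem tendsto_integral_gaussianReal_comp_mul_exp {φ : ℝ → ℝ → ℝ} {T a b t s μ : ℝ} {v : ℝ≥0}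
    (hφcont : ContinuousOn (fun p : ℝ × ℝ => φ p.1 p.2) (Icc 0 T ×ˢ Ici 0))
    (hφnn : ∀ t ∈ Icc 0 T, ∀ x ∈ Ici 0, 0 ≤ φ t x) (hb : 0 ≤ b)
    (hφgrow : ∀ t ∈ Icc 0 T, ∀ x ∈ Ici 0, φ t x ≤ a + b * x)
    (ht : t ∈ Ico 0 T) (hs : 0 < s) {m c : ℝ → ℝ}
    (hm : Tendsto m (𝓝[>] 0) (𝓝 0)) (hc : Tendsto c (𝓝[>] 0) (𝓝 0)) :
    Tendsto (fun u => ∫ z, φ (t + u) (s * exp (m u + c u * z)) ∂gaussianReal μ v)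
      (𝓝[>] 0) (𝓝 (φ t s)) := by
  have hpath {u : ℝ} (hu : u ∈ Ioo 0 (T - t)) (z : ℝ) :
      (t + u, s * exp (m u + c u * z)) ∈ Icc 0 T ×ˢ Ici 0 :=
    ⟨⟨by linarith [ht.1, hu.1], by linarith [hu.2]⟩, (mul_pos hs (exp_pos _)).le⟩
  have hnear : ∀ᶠ u in 𝓝[>] 0, u ∈ Ioo 0 (T - t) ∧ |m u| ≤ 1 ∧ |c u| ≤ 1 := by
    have h01 : |(0 : ℝ)| < 1 := by simp
    filter_upwards [Ioo_mem_nhdsGT (sub_pos.2 ht.2), hm.abs.eventually (eventually_le_nhds h01),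
      hc.abs.eventually (eventually_le_nhds h01)] with u hu hmu hcu
    exact ⟨hu, hmu, hcu⟩
  refine tendsto_integral_gaussianReal_of_norm_le_exp_abs (a := a) (b := b * (s * exp 1)) ?_ ?_ ?_
  · filter_upwards [hnear] with u hu
    exact (hφcont.comp_continuous (by fun_prop) (hpath hu.1)).aestronglyMeasurable
  · filter_upwards [hnear] with u ⟨hu, hmu, hcu⟩ z
    obtain ⟨htu, hx⟩ := hpath hu z
    have hexp : m u + c u * z ≤ 1 + |z| := by
      calc m u + c u * z ≤ |m u| + |c u| * |z| := by
            rw [← abs_mul]; exact add_le_add (le_abs_self _) (le_abs_self _)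
        _ ≤ 1 + |z| := by gcongr; exact mul_le_of_le_one_left (abs_nonneg z) hcu
    calc ‖φ (t + u) (s * exp (m u + c u * z))‖ = φ (t + u) (s * exp (m u + c u * z)) :=
          norm_of_nonneg (hφnn _ htu _ hx)
      _ ≤ a + b * (s * exp (m u + c u * z)) := hφgrow _ htu _ hx
      _ ≤ a + b * (s * exp 1) * exp |z| := by
          rw [mul_assoc b, mul_assoc s, ← exp_add]; gcongr
  · intro z
    have hpoint : Tendsto (fun u => (t + u, s * exp (m u + c u * z))) (𝓝[>] 0)
        (𝓝[Icc 0 T ×ˢ Ici 0] (t, s)) := by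
      refine tendsto_nhdsWithin_iff.2 ⟨.prodMk_nhds ?_ ?_, hnear.mono fun u hu => hpath hu.1 z⟩
      · exact ((continuous_const_add t).tendsto' 0 t (add_zero t)).mono_left nhdsWithin_le_nhds
      · simpa using ((hm.add (hc.mul_const z)).rexp).const_mul s
    exact (hφcont (t, s) ⟨⟨ht.1, ht.2.le⟩, hs.le⟩).tendsto.comp hpoint

theorem stmt_11_general {k : ℕ} (r : Fin k → ℝ) (σ : ℝ → Fin k → ℝ)
    (hσpos : ∀ w : ℝ, 0 ≤ w → ∀ i : Fin k, 0 < σ w i)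
    (hσcont : ∀ i : Fin k, ContinuousOn (fun w => σ w i) (Set.Ici 0))
    (T : ℝ)
    (φ : ℝ → ℝ → ℝ)
    (hφcont : ContinuousOn (fun p : ℝ × ℝ => φ p.1 p.2) (Set.Icc 0 T ×ˢ Set.Ici 0))
    (hφnn : ∀ t ∈ Set.Icc (0:ℝ) T, ∀ x ∈ Set.Ici (0:ℝ), 0 ≤ φ t x)
    (k₁ k₂ : ℝ) (hk₂ : 0 < k₂)
    (hφgrow : ∀ t ∈ Set.Icc (0:ℝ) T, ∀ x ∈ Set.Ici (0:ℝ), φ t x ≤ k₁ + k₂ * x)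
    (t s : ℝ) (ht : t ∈ Set.Ico 0 T) (hs : 0 < s) (i : Fin k) :
    Tendsto (fun u => ∫ x in Set.Ioi (0:ℝ), φ (t + u) x * alphaDens r σ x t s i u)
      (nhdsWithin 0 (Set.Ioi 0)) (nhds (φ t s)) := by
  have hσ : ContinuousOn (σ · i) (Ici t) := (hσcont i).mono (Ici_subset_Ici.2 ht.1)
  have hsigbar_pos : ∀ᶠ u in 𝓝[>] 0, 0 < sigbar σ t i u :=
    eventually_mem_nhdsWithin.mono fun u hu =>
      sigbar_pos hu hσ fun w hw => hσpos w (ht.1.trans hw) i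
  refine (tendsto_integral_gaussianReal_comp_mul_exp (μ := 0) (v := 1) hφcont hφnn hk₂.le hφgrow
    ht hs (tendsto_logDrift_nhdsGT_zero r hσ) (tendsto_sigbar_nhdsGT_zero hσ)).congr' ?_
  filter_upwards [hsigbar_pos] with u hu
  exact (integral_mul_alphaDens_eq_integral_gaussianReal r _ hs hu).symm

theorem stmt_11 {k : ℕ} (r : Fin k → ℝ) (σ : ℝ → Fin k → ℝ)
    (hr : ∀ i : Fin k, 0 ≤ r i)
    (hσpos : ∀ w : ℝ, 0 ≤ w → ∀ i : Fin k, 0 < σ w i)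
    (hσcont : ∀ i : Fin k, ContinuousOn (fun w => σ w i) (Set.Ici 0))
    (T : ℝ) (hT : 0 < T)
    (φ : ℝ → ℝ → ℝ)
    (hφcont : ContinuousOn (fun p : ℝ × ℝ => φ p.1 p.2) (Set.Icc 0 T ×ˢ Set.Ici 0))
    (hφnn : ∀ t ∈ Set.Icc (0:ℝ) T, ∀ x ∈ Set.Ici (0:ℝ), 0 ≤ φ t x)
    (k₁ k₂ : ℝ) (hk₁ : 0 < k₁) (hk₂ : 0 < k₂)
    (hφgrow : ∀ t ∈ Set.Icc (0:ℝ) T, ∀ x ∈ Set.Ici (0:ℝ), φ t x ≤ k₁ + k₂ * x)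
    (t s : ℝ) (ht : t ∈ Set.Ico 0 T) (hs : 0 < s) (i : Fin k) :
    Tendsto (fun u => ∫ x in Set.Ioi (0:ℝ), φ (t + u) x * alphaDens r σ x t s i u)
      (nhdsWithin 0 (Set.Ioi 0)) (nhds (φ t s)) :=
  stmt_11_general r σ hσpos hσcont T φ hφcont hφnn k₁ k₂ hk₂ hφgrow t s ht hs i
end

section
/- Assume r(i) > 0 for every i ∈ χ and fix T > 0 and a constant K₀ ≥ 0. On the Banach space C(χ×[0,T]) of continuous functions ĥ = (ĥ_i)_{i∈χ} with the sup norm, define the operator A by (Aĥ)_i(t) := ∫_t^T exp(−∫_t^u (r(i) + Σ_{j≠i} λ_{ij}(w−t)) dw)·Σ_{j≠i} λ_{ij}(u−t)·ĥ_j(u) du − K₀·exp(−∫_t^T (r(i) + Σ_{j≠i} λ_{ij}(w−t)) dw). Then A is a strict contraction: ‖Aĥ¹ − Aĥ²‖_∞ ≤ J·‖ĥ¹ − ĥ²‖_∞ with constant J ≤ 1 − e^{−cT} < 1, and consequently the fixed-point equation ĥ = Aĥ — which is the equation satisfied by the restriction to the degenerate boundary s = 0 of any classical solution of the terminal value problem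 (P) — has exactly one solution in C(χ×[0,T]). -/
open MeasureTheory Real Filter Set

noncomputable def Aop2 {k : ℕ} (lam : Fin k → Fin k → ℝ → ℝ) (r : Fin k → ℝ)
    (T K₀ : ℝ) (h : Fin k → ℝ → ℝ) (i : Fin k) (t : ℝ) : ℝ :=
  (∫ u in t..T,
    Real.exp (-(∫ w in t..u, (r i + sumLam lam i (w - t)))) *
      ∑ j ∈ Finset.univ.filter (fun j => j ≠ i), lam i j (u - t) * h j u)
  - K₀ * Real.exp (-(∫ w in t..T, (r i + sumLam lam i (w - t))))

noncomputable def normC {k : ℕ} (T : ℝ) (h : Fin k → ℝ → ℝ) : ℝ :=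
  sSup {a : ℝ | ∃ i : Fin k, ∃ t ∈ Set.Icc (0:ℝ) T, a = |h i t|}

/-!
After the substitution `u = t + v`, `(A h)ᵢ(t)` is an integral over `v ∈ [0, T - t]` against
the kernel `e^{-r(i) v - Λᵢ(v)} λᵢⱼ(v)`. As `r ≥ 0`, this kernel is dominated by the density
`Λᵢ' e^{-Λᵢ}` of the holding time in state `i`, whose integral over `[0, T - t]` is
`1 - e^{-Λᵢ(T - t)} ≤ 1 - e^{-cT}`: this is the contraction constant. Continuity of `A h` follows
by dominated convergence, existence of a fixed point from Banach's theorem on `C([0, T])ᵏ`, and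
uniqueness from the contraction estimate applied to two fixed points.
-/

structure AdmissibleRates {k : ℕ} (lam : Fin k → Fin k → ℝ → ℝ) (c : ℝ) : Prop where
  continuousOn : ∀ i j : Fin k, i ≠ j → ContinuousOn (lam i j) (Ioi 0)
  nonneg : ∀ i j : Fin k, i ≠ j → ∀ y : ℝ, 0 < y → 0 ≤ lam i j y
  sumLam_le : ∀ i : Fin k, ∀ y : ℝ, 0 < y → sumLam lam i y ≤ c

lemma fcdf_zero {k : ℕ} (lam : Fin k → Fin k → ℝ → ℝ) (i : Fin k) : Fcdf lam i 0 = 0 := by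
  simp [Fcdf, Lambda]

namespace AdmissibleRates

variable {k : ℕ} {lam : Fin k → Fin k → ℝ → ℝ} {c : ℝ} (hlam : AdmissibleRates lam c) (i : Fin k)
include hlam

lemma continuousOn_sumLam : ContinuousOn (sumLam lam i) (Ioi 0) :=
  continuousOn_finsetSum _ fun j hj => hlam.continuousOn i j (Finset.mem_filter.1 hj).2.symm

lemma sumLam_nonneg {y : ℝ} (hy : 0 < y) : 0 ≤ sumLam lam i y :=
  Finset.sum_nonneg fun j hj => hlam.nonneg i j (Finset.mem_filter.1 hj).2.symm y hy

lemma const_nonneg (i : Fin k) : 0 ≤ c :=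
  (hlam.sumLam_nonneg i one_pos).trans (hlam.sumLam_le i 1 one_pos)

lemma norm_sumLam_le {y : ℝ} (hy : 0 < y) : ‖sumLam lam i y‖ ≤ c := by
  rw [Real.norm_of_nonneg (hlam.sumLam_nonneg i hy)]
  exact hlam.sumLam_le i y hy

lemma intervalIntegrable_sumLam {a b : ℝ} (ha : 0 ≤ a) (hb : 0 ≤ b) :
    IntervalIntegrable (sumLam lam i) volume a b := by
  have hsub : uIoc a b ⊆ Ioi 0 := fun v hv => (le_min ha hb).trans_lt hv.1
  rw [intervalIntegrable_iff]
  exact IntegrableOn.of_bound measure_Ioc_lt_top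
    (((hlam.continuousOn_sumLam i).mono hsub).aestronglyMeasurable measurableSet_uIoc) c
    ((ae_restrict_iff' measurableSet_uIoc).2 (ae_of_all _ fun v hv =>
      hlam.norm_sumLam_le i (hsub hv)))

lemma abs_lambda_sub_le {x y : ℝ} (hx : 0 ≤ x) (hy : 0 ≤ y) :
    |Lambda lam i x - Lambda lam i y| ≤ c * |x - y| := by
  rw [Lambda, Lambda, intervalIntegral.integral_interval_sub_left
    (hlam.intervalIntegrable_sumLam i le_rfl hx) (hlam.intervalIntegrable_sumLam i le_rfl hy),
    ← Real.norm_eq_abs]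
  exact intervalIntegral.norm_integral_le_of_norm_le_const fun v hv =>
    hlam.norm_sumLam_le i ((le_min hy hx).trans_lt hv.1)

lemma continuousOn_lambda : ContinuousOn (Lambda lam i) (Ici 0) :=
  LipschitzOnWith.continuousOn (K := c.toNNReal) <| LipschitzOnWith.of_dist_le_mul
    fun _ hx _ hy => (hlam.abs_lambda_sub_le i hx hy).trans
      (mul_le_mul_of_nonneg_right (Real.le_coe_toNNReal c) (abs_nonneg _))

lemma lambda_le_mul {y : ℝ} (hy : 0 ≤ y) : Lambda lam i y ≤ c * y := by
  simpa [Lambda, abs_of_nonneg hy] using (le_abs_self _).trans (hlam.abs_lambda_sub_le i hy le_rfl)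

lemma hasDerivAt_lambda {v : ℝ} (hv : 0 < v) : HasDerivAt (Lambda lam i) (sumLam lam i v) v :=
  intervalIntegral.integral_hasDerivAt_right (hlam.intervalIntegrable_sumLam i le_rfl hv.le)
    ((hlam.continuousOn_sumLam i).stronglyMeasurableAtFilter isOpen_Ioi v hv)
    ((hlam.continuousOn_sumLam i).continuousAt (Ioi_mem_nhds hv))

lemma hasDerivAt_fcdf {v : ℝ} (hv : 0 < v) : HasDerivAt (Fcdf lam i) (fdens lam i v) v := by
  have h := ((hlam.hasDerivAt_lambda i hv).neg.exp).const_sub 1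
  exact h.congr_deriv (by rw [fdens, Pi.neg_apply]; ring)

lemma continuousOn_fcdf : ContinuousOn (Fcdf lam i) (Ici 0) :=
  continuousOn_const.sub (hlam.continuousOn_lambda i).neg.rexp

lemma fdens_nonneg {v : ℝ} (hv : 0 < v) : 0 ≤ fdens lam i v :=
  mul_nonneg (hlam.sumLam_nonneg i hv) (exp_nonneg _)

lemma intervalIntegrable_fdens {y : ℝ} (hy : 0 ≤ y) :
    IntervalIntegrable (fdens lam i) volume 0 y :=
  (intervalIntegrable_iff_integrableOn_Ioc_of_le hy).2 <|
    intervalIntegral.integrableOn_deriv_of_nonneg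
      ((hlam.continuousOn_fcdf i).mono Icc_subset_Ici_self)
      (fun _ hv => hlam.hasDerivAt_fcdf i hv.1) fun _ hv => hlam.fdens_nonneg i hv.1

lemma integral_fdens {y : ℝ} (hy : 0 ≤ y) : ∫ v in 0..y, fdens lam i v = Fcdf lam i y := by
  rw [intervalIntegral.integral_eq_sub_of_hasDerivAt_of_le hy
    ((hlam.continuousOn_fcdf i).mono Icc_subset_Ici_self)
    (fun v hv => hlam.hasDerivAt_fcdf i hv.1) (hlam.intervalIntegrable_fdens i hy),
    fcdf_zero, sub_zero]

lemma fcdf_le {y T : ℝ} (hy : 0 ≤ y) (hyT : y ≤ T) : Fcdf lam i y ≤ 1 - exp (-(c * T)) := by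
  have : Lambda lam i y ≤ c * T :=
    (hlam.lambda_le_mul i hy).trans (mul_le_mul_of_nonneg_left hyT (hlam.const_nonneg i))
  unfold Fcdf
  gcongr

end AdmissibleRates

section NormC

variable {k : ℕ} {T : ℝ} {d : Fin k → ℝ → ℝ}

lemma bddAbove_normC_set (hd : ∀ i, ContinuousOn (d i) (Icc 0 T)) :
    BddAbove {a : ℝ | ∃ i : Fin k, ∃ t ∈ Icc (0:ℝ) T, a = |d i t|} := by
  have : {a : ℝ | ∃ i : Fin k, ∃ t ∈ Icc (0:ℝ) T, a = |d i t|}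
      = ⋃ i ∈ univ, (fun t => |d i t|) '' Icc 0 T := by
    ext; simp [eq_comm]
  rw [this, finite_univ.bddAbove_biUnion]
  exact fun i _ => isCompact_Icc.bddAbove_image (hd i).abs

lemma abs_le_normC (hd : ∀ i, ContinuousOn (d i) (Icc 0 T)) {i : Fin k} {t : ℝ}
    (ht : t ∈ Icc 0 T) : |d i t| ≤ normC T d :=
  le_csSup (bddAbove_normC_set hd) ⟨i, t, ht, rfl⟩

lemma normC_nonneg : 0 ≤ normC T d :=
  Real.sSup_nonneg fun _ ⟨_, _, _, ha⟩ => ha ▸ abs_nonneg _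

lemma normC_le {B : ℝ} (hB : 0 ≤ B) (hd : ∀ i, ∀ t ∈ Icc (0:ℝ) T, |d i t| ≤ B) :
    normC T d ≤ B :=
  Real.sSup_le (fun _ ⟨i, t, ht, ha⟩ => ha ▸ hd i t ht) hB

end NormC

/-- The integrand of `Aop2` after the substitution `u = t + v`. -/
noncomputable def aop2Integrand {k : ℕ} (lam : Fin k → Fin k → ℝ → ℝ) (r : Fin k → ℝ)
    (h : Fin k → ℝ → ℝ) (i : Fin k) (t v : ℝ) : ℝ :=
  exp (-(r i * v + Lambda lam i v)) *
    ∑ j ∈ Finset.univ.filter (fun j => j ≠ i), lam i j v * h j (v + t)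

section Integrand

variable {k : ℕ} {lam : Fin k → Fin k → ℝ → ℝ} {c : ℝ} {r : Fin k → ℝ} {T : ℝ}
  {h : Fin k → ℝ → ℝ} {i : Fin k} {t : ℝ}

lemma aop2Integrand_sub (h₁ h₂ : Fin k → ℝ → ℝ) (v : ℝ) :
    aop2Integrand lam r h₁ i t v - aop2Integrand lam r h₂ i t v
      = aop2Integrand lam r (h₁ - h₂) i t v := by
  simp only [aop2Integrand, Pi.sub_apply, mul_sub, Finset.sum_sub_distrib]

lemma abs_aop2Integrand_le (hlam : AdmissibleRates lam c) (hr : 0 ≤ r i) {v M : ℝ}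
    (hv : 0 < v) (hM : ∀ j, |h j (v + t)| ≤ M) :
    |aop2Integrand lam r h i t v| ≤ fdens lam i v * M := by
  have hexp : exp (-(r i * v + Lambda lam i v)) ≤ exp (-Lambda lam i v) :=
    exp_le_exp.2 (by nlinarith)
  have hsum : |∑ j ∈ Finset.univ.filter (fun j => j ≠ i), lam i j v * h j (v + t)|
      ≤ sumLam lam i v * M := by
    rw [sumLam, Finset.sum_mul]
    refine (Finset.abs_sum_le_sum_abs _ _).trans (Finset.sum_le_sum fun j hj => ?_)
    have hl := hlam.nonneg i j (Finset.mem_filter.1 hj).2.symm v hv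
    rw [abs_mul, abs_of_nonneg hl]
    exact mul_le_mul_of_nonneg_left (hM j) hl
  rw [aop2Integrand, abs_mul, abs_exp, fdens, mul_comm (sumLam lam i v), mul_assoc]
  exact mul_le_mul hexp hsum (abs_nonneg _) (exp_nonneg _)

lemma continuousOn_aop2Integrand (hlam : AdmissibleRates lam c)
    (hh : ∀ j, ContinuousOn (h j) (Icc 0 T)) (ht : 0 ≤ t) :
    ContinuousOn (aop2Integrand lam r h i t) (Ioc 0 (T - t)) := by
  have hΛ := (hlam.continuousOn_lambda i).mono fun v (hv : v ∈ Ioc 0 (T - t)) => hv.1.le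
  refine ((continuousOn_const.mul continuousOn_id).add hΛ).neg.rexp.mul
    (continuousOn_finsetSum _ fun j hj => ?_)
  refine ((hlam.continuousOn i j (Finset.mem_filter.1 hj).2.symm).mono
    fun v hv => hv.1).mul ((hh j).comp (continuousOn_id.add continuousOn_const) ?_)
  exact fun v hv => ⟨by linarith [hv.1], by linarith [hv.2]⟩

lemma intervalIntegrable_aop2Integrand (hlam : AdmissibleRates lam c) (hr : 0 ≤ r i)
    (hh : ∀ j, ContinuousOn (h j) (Icc 0 T)) (ht : t ∈ Icc 0 T) :
    IntervalIntegrable (aop2Integrand lam r h i t) volume 0 (T - t) := by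
  have hTt : 0 ≤ T - t := sub_nonneg.2 ht.2
  refine ((hlam.intervalIntegrable_fdens i hTt).mul_const (normC T h)).mono_fun' ?_ ?_
  · rw [uIoc_of_le hTt]
    exact (continuousOn_aop2Integrand hlam hh ht.1).aestronglyMeasurable measurableSet_Ioc
  · rw [uIoc_of_le hTt]
    refine (ae_restrict_iff' measurableSet_Ioc).2 (ae_of_all _ fun v hv => ?_)
    exact abs_aop2Integrand_le hlam hr hv.1 fun j =>
      abs_le_normC hh ⟨by linarith [ht.1, hv.1], by linarith [hv.2]⟩

end Integrand

lemma one_sub_exp_neg_mul_nonneg {c T : ℝ} (hc : 0 ≤ c) (hT : 0 ≤ T) :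
    0 ≤ 1 - exp (-(c * T)) :=
  sub_nonneg.2 (exp_le_one_iff.2 (neg_nonpos.2 (mul_nonneg hc hT)))

section Operator

variable {k : ℕ} {lam : Fin k → Fin k → ℝ → ℝ} {c : ℝ} {r : Fin k → ℝ} {T : ℝ} (K₀ : ℝ)

lemma integral_const_add_sumLam_comp_sub (hlam : AdmissibleRates lam c) (i : Fin k) {t u : ℝ}
    (htu : t ≤ u) :
    ∫ w in t..u, (r i + sumLam lam i (w - t)) = r i * (u - t) + Lambda lam i (u - t) := by
  rw [intervalIntegral.integral_comp_sub_right (fun w => r i + sumLam lam i w) t, sub_self,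
    intervalIntegral.integral_add intervalIntegrable_const
      (hlam.intervalIntegrable_sumLam i le_rfl (sub_nonneg.2 htu)),
    intervalIntegral.integral_const, smul_eq_mul, sub_zero, mul_comm, Lambda]

lemma aop2_eq_integral (hlam : AdmissibleRates lam c) (h : Fin k → ℝ → ℝ) (i : Fin k) {t : ℝ}
    (ht : t ≤ T) :
    Aop2 lam r T K₀ h i t = (∫ v in 0..T - t, aop2Integrand lam r h i t v)
      - K₀ * exp (-(r i * (T - t) + Lambda lam i (T - t))) := by
  have hsubst := intervalIntegral.integral_comp_sub_right (aop2Integrand lam r h i t) t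
    (a := t) (b := T)
  rw [sub_self] at hsubst
  rw [Aop2, integral_const_add_sumLam_comp_sub hlam i ht, ← hsubst]
  congr 1
  refine intervalIntegral.integral_congr fun u hu => ?_
  rw [uIcc_of_le ht] at hu
  simp only [aop2Integrand, integral_const_add_sumLam_comp_sub hlam i hu.1, sub_add_cancel]

lemma aop2_congr {h h' : Fin k → ℝ → ℝ} (he : ∀ j, EqOn (h j) (h' j) (Icc 0 T)) (i : Fin k)
    {t : ℝ} (ht : t ∈ Icc 0 T) : Aop2 lam r T K₀ h i t = Aop2 lam r T K₀ h' i t := by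
  unfold Aop2
  congr 1
  refine intervalIntegral.integral_congr fun u hu => ?_
  rw [uIcc_of_le ht.2] at hu
  simp only [he _ ⟨ht.1.trans hu.1, hu.2⟩]

lemma abs_aop2_sub_le (hlam : AdmissibleRates lam c) (hr : ∀ i, 0 ≤ r i)
    {h₁ h₂ : Fin k → ℝ → ℝ} (hh₁ : ∀ j, ContinuousOn (h₁ j) (Icc 0 T))
    (hh₂ : ∀ j, ContinuousOn (h₂ j) (Icc 0 T)) {M : ℝ}
    (hM : ∀ j, ∀ u ∈ Icc (0:ℝ) T, |h₁ j u - h₂ j u| ≤ M) {i : Fin k} {t : ℝ}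
    (ht : t ∈ Icc 0 T) :
    |Aop2 lam r T K₀ h₁ i t - Aop2 lam r T K₀ h₂ i t| ≤ (1 - exp (-(c * T))) * M := by
  have hTt : 0 ≤ T - t := sub_nonneg.2 ht.2
  have hM0 : 0 ≤ M := (abs_nonneg _).trans (hM i t ht)
  rw [aop2_eq_integral K₀ hlam h₁ i ht.2, aop2_eq_integral K₀ hlam h₂ i ht.2,
    sub_sub_sub_cancel_right, ← intervalIntegral.integral_sub
      (intervalIntegrable_aop2Integrand hlam (hr i) hh₁ ht)
      (intervalIntegrable_aop2Integrand hlam (hr i) hh₂ ht)]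
  calc |∫ v in 0..T - t, aop2Integrand lam r h₁ i t v - aop2Integrand lam r h₂ i t v|
      ≤ ∫ v in 0..T - t, fdens lam i v * M := by
        rw [← Real.norm_eq_abs]
        refine intervalIntegral.norm_integral_le_of_norm_le hTt (ae_of_all _ fun v hv => ?_)
          ((hlam.intervalIntegrable_fdens i hTt).mul_const M)
        rw [Real.norm_eq_abs, aop2Integrand_sub]
        exact abs_aop2Integrand_le hlam (hr i) hv.1 fun j =>
          hM j _ ⟨by linarith [ht.1, hv.1], by linarith [hv.2]⟩
    _ = Fcdf lam i (T - t) * M := by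
        rw [intervalIntegral.integral_mul_const, hlam.integral_fdens i hTt]
    _ ≤ (1 - exp (-(c * T))) * M :=
        mul_le_mul_of_nonneg_right (hlam.fcdf_le i hTt (by linarith [ht.1])) hM0

lemma normC_aop2_sub_le (hlam : AdmissibleRates lam c) (hr : ∀ i, 0 ≤ r i) (hc : 0 ≤ c)
    (hT : 0 ≤ T) {h₁ h₂ : Fin k → ℝ → ℝ} (hh₁ : ∀ j, ContinuousOn (h₁ j) (Icc 0 T))
    (hh₂ : ∀ j, ContinuousOn (h₂ j) (Icc 0 T)) :
    normC T (fun i t => Aop2 lam r T K₀ h₁ i t - Aop2 lam r T K₀ h₂ i t)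
      ≤ (1 - exp (-(c * T))) * normC T (fun i t => h₁ i t - h₂ i t) :=
  normC_le (mul_nonneg (one_sub_exp_neg_mul_nonneg hc hT) normC_nonneg) fun _ _ ht =>
    abs_aop2_sub_le K₀ hlam hr hh₁ hh₂
      (fun _ _ hu => abs_le_normC (fun j => (hh₁ j).sub (hh₂ j)) hu) ht

end Operator

lemma continuousAt_indicator_Iic_apply {X : Type*} [TopologicalSpace X] {g : X → ℝ}
    {φ : X → ℝ → ℝ} {x₀ : X} {v : ℝ} (hg : ContinuousAt g x₀)
    (hφ : ContinuousAt (fun x => φ x v) x₀) (hv : v ≠ g x₀) :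
    ContinuousAt (fun x => (Iic (g x)).indicator (φ x) v) x₀ := by
  rcases hv.lt_or_gt with hlt | hgt
  · refine hφ.congr ?_
    filter_upwards [hg.eventually (lt_mem_nhds hlt)] with x hx
    exact (indicator_of_mem (mem_Iic.2 hx.le) _).symm
  · refine (continuousAt_const (y := (0 : ℝ))).congr ?_
    filter_upwards [hg.eventually (gt_mem_nhds hgt)] with x hx
    exact (indicator_of_notMem (mt mem_Iic.1 (not_le.2 hx)) (φ x)).symm

section Continuity

variable {k : ℕ} {lam : Fin k → Fin k → ℝ → ℝ} {c : ℝ} {r : Fin k → ℝ} {T : ℝ} (K₀ : ℝ)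

lemma continuousOn_integral_aop2Integrand (hlam : AdmissibleRates lam c) (hr : ∀ i, 0 ≤ r i)
    (hT : 0 ≤ T) {h : Fin k → ℝ → ℝ} (hh : ∀ j, Continuous (h j)) (i : Fin k) :
    ContinuousOn (fun t => ∫ v in 0..T - t, aop2Integrand lam r h i t v) (Icc 0 T) := by
  have hh' : ∀ j, ContinuousOn (h j) (Icc 0 T) := fun j => (hh j).continuousOn
  -- a fixed domain of integration, for dominated convergence
  have hrep : EqOn (fun t => ∫ v in 0..T - t, aop2Integrand lam r h i t v)
      (fun t => ∫ v in 0..T, (Iic (T - t)).indicator (aop2Integrand lam r h i t) v) (Icc 0 T) :=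
    fun t ht => (intervalIntegral.integral_indicator ⟨sub_nonneg.2 ht.2, by linarith [ht.1]⟩).symm
  refine ContinuousOn.congr (fun t₀ _ => ?_) hrep
  refine intervalIntegral.continuousWithinAt_of_dominated_interval
    (bound := fun v => fdens lam i v * normC T h) ?_ ?_
    ((hlam.intervalIntegrable_fdens i hT).mul_const _) ?_
  · filter_upwards [self_mem_nhdsWithin] with t ht
    rw [uIoc_of_le hT, aestronglyMeasurable_indicator_iff measurableSet_Iic,
      Measure.restrict_restrict measurableSet_Iic, Iic_inter_Ioc_of_le (by linarith [ht.1])]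
    exact (continuousOn_aop2Integrand hlam hh' ht.1).aestronglyMeasurable measurableSet_Ioc
  · filter_upwards [self_mem_nhdsWithin] with t ht
    refine ae_of_all _ fun v hv => ?_
    rw [uIoc_of_le hT] at hv
    by_cases hvt : v ≤ T - t
    · rw [indicator_of_mem (mem_Iic.2 hvt), Real.norm_eq_abs]
      exact abs_aop2Integrand_le hlam (hr i) hv.1 fun j =>
        abs_le_normC hh' ⟨by linarith [ht.1, hv.1], by linarith⟩
    · rw [indicator_of_notMem (mt mem_Iic.1 hvt), norm_zero]
      exact mul_nonneg (hlam.fdens_nonneg i hv.1) normC_nonneg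
  · filter_upwards [Measure.ae_ne volume (T - t₀)] with v hv _
    refine (continuousAt_indicator_Iic_apply (by fun_prop) ?_ hv).continuousWithinAt
    unfold aop2Integrand
    fun_prop

lemma continuousOn_aop2_of_continuous (hlam : AdmissibleRates lam c) (hr : ∀ i, 0 ≤ r i)
    (hT : 0 ≤ T) {h : Fin k → ℝ → ℝ} (hh : ∀ j, Continuous (h j)) (i : Fin k) :
    ContinuousOn (Aop2 lam r T K₀ h i) (Icc 0 T) := by
  have hΛ : ContinuousOn (fun t => Lambda lam i (T - t)) (Icc 0 T) :=
    (hlam.continuousOn_lambda i).comp (continuousOn_const.sub continuousOn_id)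
      fun t ht => sub_nonneg.2 ht.2
  refine ((continuousOn_integral_aop2Integrand hlam hr hT hh i).sub
      (continuousOn_const.mul ((continuousOn_const.mul
        (continuousOn_const.sub continuousOn_id)).add hΛ).neg.rexp)).congr
    fun t ht => aop2_eq_integral K₀ hlam h i ht.2

lemma continuousOn_aop2 (hlam : AdmissibleRates lam c) (hr : ∀ i, 0 ≤ r i) (hT : 0 ≤ T)
    {h : Fin k → ℝ → ℝ} (hh : ∀ j, ContinuousOn (h j) (Icc 0 T)) (i : Fin k) :
    ContinuousOn (Aop2 lam r T K₀ h i) (Icc 0 T) :=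
  (continuousOn_aop2_of_continuous K₀ hlam hr hT
    (fun j => continuous_IccExtend_iff.2 (hh j).domRestrict) i).congr
    fun _ ht => aop2_congr K₀
      (fun j _ hu => (IccExtend_of_mem hT ((Icc 0 T).domRestrict (h j)) hu).symm) i ht

end Continuity

section FixedPoint

variable {k : ℕ} {lam : Fin k → Fin k → ℝ → ℝ} {c : ℝ} {r : Fin k → ℝ} {T : ℝ} (K₀ : ℝ)
  (hlam : AdmissibleRates lam c) (hr : ∀ i, 0 ≤ r i) (hT : 0 ≤ T)

noncomputable def aop2C (f : Fin k → C(Icc (0:ℝ) T, ℝ)) : Fin k → C(Icc (0:ℝ) T, ℝ) :=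
  fun i => ⟨(Icc 0 T).domRestrict (Aop2 lam r T K₀ (fun j => IccExtend hT (f j)) i),
    (continuousOn_aop2_of_continuous K₀ hlam hr hT
      (fun j => continuous_IccExtend_iff.2 (f j).continuous) i).domRestrict⟩

lemma dist_aop2C_le (hc : 0 ≤ c) (f g : Fin k → C(Icc (0:ℝ) T, ℝ)) :
    dist (aop2C K₀ hlam hr hT f) (aop2C K₀ hlam hr hT g)
      ≤ (1 - exp (-(c * T))) * dist f g := by
  have hB := mul_nonneg (one_sub_exp_neg_mul_nonneg hc hT) (dist_nonneg (x := f) (y := g))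
  refine (dist_pi_le_iff hB).2 fun i => (ContinuousMap.dist_le hB).2 fun x => ?_
  refine abs_aop2_sub_le K₀ hlam hr
    (fun j => (continuous_IccExtend_iff.2 (f j).continuous).continuousOn)
    (fun j => (continuous_IccExtend_iff.2 (g j).continuous).continuousOn) (fun j u hu => ?_) x.2
  rw [IccExtend_of_mem hT _ hu, IccExtend_of_mem hT _ hu, ← Real.dist_eq]
  exact (ContinuousMap.dist_apply_le_dist _).trans (dist_le_pi_dist f g j)

include hlam hr hT in
lemma exists_fixedPoint_aop2 (hc : 0 ≤ c) :
    ∃ h : Fin k → ℝ → ℝ, (∀ i, ContinuousOn (h i) (Icc 0 T)) ∧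
      ∀ i, ∀ t ∈ Icc (0:ℝ) T, h i t = Aop2 lam r T K₀ h i t := by
  have hΦ : ContractingWith ⟨_, one_sub_exp_neg_mul_nonneg hc hT⟩ (aop2C K₀ hlam hr hT) :=
    ⟨show (1 - exp (-(c * T)) : ℝ) < 1 by linarith [exp_pos (-(c * T))],
      LipschitzWith.of_dist_le_mul (dist_aop2C_le K₀ hlam hr hT hc)⟩
  set f := ContractingWith.fixedPoint _ hΦ
  have hfix : aop2C K₀ hlam hr hT f = f := hΦ.fixedPoint_isFixedPt
  refine ⟨fun j => IccExtend hT (f j),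
    fun j => (continuous_IccExtend_iff.2 (f j).continuous).continuousOn, fun i t ht => ?_⟩
  calc IccExtend hT (f i) t = f i ⟨t, ht⟩ := IccExtend_of_mem hT _ ht
    _ = aop2C K₀ hlam hr hT f i ⟨t, ht⟩ := by rw [hfix]
    _ = Aop2 lam r T K₀ (fun j => IccExtend hT (f j)) i t := rfl

include hlam hr hT in
lemma eq_of_aop2_fixed (hc : 0 ≤ c) {g h : Fin k → ℝ → ℝ}
    (hg : ∀ i, ContinuousOn (g i) (Icc 0 T))
    (hgA : ∀ i, ∀ t ∈ Icc (0:ℝ) T, g i t = Aop2 lam r T K₀ g i t)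
    (hh : ∀ i, ContinuousOn (h i) (Icc 0 T))
    (hhA : ∀ i, ∀ t ∈ Icc (0:ℝ) T, h i t = Aop2 lam r T K₀ h i t)
    {i : Fin k} {t : ℝ} (ht : t ∈ Icc 0 T) : g i t = h i t := by
  have hd : ∀ i, ContinuousOn (fun t => g i t - h i t) (Icc 0 T) := fun i => (hg i).sub (hh i)
  set M := normC T (fun i t => g i t - h i t)
  have hM : M ≤ (1 - exp (-(c * T))) * M :=
    normC_le (mul_nonneg (one_sub_exp_neg_mul_nonneg hc hT) normC_nonneg) fun i t ht => by
      rw [hgA i t ht, hhA i t ht]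
      exact abs_aop2_sub_le K₀ hlam hr hg hh (fun j u hu => abs_le_normC hd hu) ht
  have hM0 : M ≤ 0 := by nlinarith [exp_pos (-(c * T))]
  exact sub_eq_zero.1 (abs_nonpos_iff.1 ((abs_le_normC hd ht).trans hM0))

end FixedPoint

theorem stmt_16_general {k : ℕ} (lam : Fin k → Fin k → ℝ → ℝ)
    (hcont : ∀ i j : Fin k, i ≠ j → ContinuousOn (lam i j) (Set.Ioi 0))
    (hnn : ∀ i j : Fin k, i ≠ j → ∀ y : ℝ, 0 < y → 0 ≤ lam i j y)
    (c : ℝ) (hc : 0 < c)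
    (hbound : ∀ i : Fin k, ∀ y : ℝ, 0 < y → sumLam lam i y ≤ c)
    (r : Fin k → ℝ) (hr : ∀ i : Fin k, 0 < r i)
    (T : ℝ) (hT : 0 < T) (K₀ : ℝ) :
    -- A maps C(χ×[0,T]) into itself :
    (∀ h : Fin k → ℝ → ℝ, (∀ i : Fin k, ContinuousOn (h i) (Set.Icc 0 T)) →
      ∀ i : Fin k, ContinuousOn (Aop2 lam r T K₀ h i) (Set.Icc 0 T)) ∧
    -- A is a strict contraction with constant J ≤ 1 - e^{-cT} :
    (∀ h₁ h₂ : Fin k → ℝ → ℝ,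
      (∀ i : Fin k, ContinuousOn (h₁ i) (Set.Icc 0 T)) →
      (∀ i : Fin k, ContinuousOn (h₂ i) (Set.Icc 0 T)) →
      normC T (fun i t => Aop2 lam r T K₀ h₁ i t - Aop2 lam r T K₀ h₂ i t)
        ≤ (1 - Real.exp (-(c * T))) * normC T (fun i t => h₁ i t - h₂ i t)) ∧
    1 - Real.exp (-(c * T)) < 1 ∧
    -- the fixed point equation has exactly one solution in C(χ×[0,T]) :
    (∃ h : Fin k → ℝ → ℝ,
      ((∀ i : Fin k, ContinuousOn (h i) (Set.Icc 0 T)) ∧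
        ∀ i : Fin k, ∀ t ∈ Set.Icc (0:ℝ) T, h i t = Aop2 lam r T K₀ h i t) ∧
      ∀ g : Fin k → ℝ → ℝ,
        ((∀ i : Fin k, ContinuousOn (g i) (Set.Icc 0 T)) ∧
          ∀ i : Fin k, ∀ t ∈ Set.Icc (0:ℝ) T, g i t = Aop2 lam r T K₀ g i t) →
        ∀ i : Fin k, ∀ t ∈ Set.Icc (0:ℝ) T, h i t = g i t) := by
  have hlam : AdmissibleRates lam c := ⟨hcont, hnn, hbound⟩
  have hr₀ : ∀ i, 0 ≤ r i := fun i => (hr i).le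
  obtain ⟨h, hh, hhA⟩ := exists_fixedPoint_aop2 K₀ hlam hr₀ hT.le hc.le
  exact ⟨fun _ hh i => continuousOn_aop2 K₀ hlam hr₀ hT.le hh i,
    fun _ _ => normC_aop2_sub_le K₀ hlam hr₀ hc.le hT.le,
    by linarith [exp_pos (-(c * T))],
    h, ⟨hh, hhA⟩,
    fun _ ⟨hg, hgA⟩ _ _ ht => eq_of_aop2_fixed K₀ hlam hr₀ hT.le hc.le hh hhA hg hgA ht⟩

theorem stmt_16 {k : ℕ} (lam : Fin k → Fin k → ℝ → ℝ)
    (hcont : ∀ i j : Fin k, i ≠ j → ContinuousOn (lam i j) (Set.Ioi 0))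
    (hnn : ∀ i j : Fin k, i ≠ j → ∀ y : ℝ, 0 < y → 0 ≤ lam i j y)
    (c : ℝ) (hc : 0 < c)
    (hbound : ∀ i : Fin k, ∀ y : ℝ, 0 < y → sumLam lam i y ≤ c)
    (hinf : ∀ i : Fin k, Tendsto (Lambda lam i) atTop atTop)
    (r : Fin k → ℝ) (hr : ∀ i : Fin k, 0 < r i)
    (T : ℝ) (hT : 0 < T) (K₀ : ℝ) (hK₀ : 0 ≤ K₀) :
    -- A maps C(χ×[0,T]) into itself :
    (∀ h : Fin k → ℝ → ℝ, (∀ i : Fin k, ContinuousOn (h i) (Set.Icc 0 T)) →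
      ∀ i : Fin k, ContinuousOn (Aop2 lam r T K₀ h i) (Set.Icc 0 T)) ∧
    -- A is a strict contraction with constant J ≤ 1 - e^{-cT} :
    (∀ h₁ h₂ : Fin k → ℝ → ℝ,
      (∀ i : Fin k, ContinuousOn (h₁ i) (Set.Icc 0 T)) →
      (∀ i : Fin k, ContinuousOn (h₂ i) (Set.Icc 0 T)) →
      normC T (fun i t => Aop2 lam r T K₀ h₁ i t - Aop2 lam r T K₀ h₂ i t)
        ≤ (1 - Real.exp (-(c * T))) * normC T (fun i t => h₁ i t - h₂ i t)) ∧
    1 - Real.exp (-(c * T)) < 1 ∧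
    -- the fixed point equation has exactly one solution in C(χ×[0,T]) :
    (∃ h : Fin k → ℝ → ℝ,
      ((∀ i : Fin k, ContinuousOn (h i) (Set.Icc 0 T)) ∧
        ∀ i : Fin k, ∀ t ∈ Set.Icc (0:ℝ) T, h i t = Aop2 lam r T K₀ h i t) ∧
      ∀ g : Fin k → ℝ → ℝ,
        ((∀ i : Fin k, ContinuousOn (g i) (Set.Icc 0 T)) ∧
          ∀ i : Fin k, ∀ t ∈ Set.Icc (0:ℝ) T, g i t = Aop2 lam r T K₀ g i t) →
        ∀ i : Fin k, ∀ t ∈ Set.Icc (0:ℝ) T, h i t = g i t) :=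
  stmt_16_general lam hcont hnn c hc hbound r hr T hT K₀
end
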